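/- arXiv:1403.0622 — 5 statements merged into one kernel-verified Lean document; each statement's English description precedes it below -/
import Mathlib

section
/- Let G be a κ-deletion-minimal graph with respect to total coloring. If u and v are adjacent vertices of G with deg_G(v) ≤ ⌊(κ−1)/2⌋, then deg_G(u) + deg_G(v) ≥ κ + 1. -/
open SimpleGraph

variable {V : Type*}

/-- The degree of a vertex, defined via the cardinality of its neighbor set. -/
noncomputable def deg (G : SimpleGraph V) (v : V) : ℕ := (G.neighborSet v).ncard

/-- The maximum degree of a graph. -/
noncomputable def maxDeg (G : SimpleGraph V) : ℕ := ⨆ v, deg G v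

/-- `fv` colors the vertices and `fe` colors the edges; together they form a total
coloring: adjacent vertices get distinct colors, distinct edges sharing a vertex get
distinct colors, and a vertex gets a color distinct from every edge incident to it. -/
def IsTotalColoring (G : SimpleGraph V) {α : Type*} (fv : V → α) (fe : Sym2 V → α) : Prop :=
  (∀ u v : V, G.Adj u v → fv u ≠ fv v) ∧
  (∀ e₁ e₂ : Sym2 V, e₁ ∈ G.edgeSet → e₂ ∈ G.edgeSet → e₁ ≠ e₂ →
      (∃ w : V, w ∈ e₁ ∧ w ∈ e₂) → fe e₁ ≠ fe e₂) ∧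
  (∀ (v : V) (e : Sym2 V), e ∈ G.edgeSet → v ∈ e → fv v ≠ fe e)

/-- `G` has a total coloring with `n` colors. -/
def HasTotalColoring (G : SimpleGraph V) (n : ℕ) : Prop :=
  ∃ (fv : V → Fin n) (fe : Sym2 V → Fin n), IsTotalColoring G fv fe

/-- The total chromatic number of `G`. -/
noncomputable def totalChromaticNumber (G : SimpleGraph V) : ℕ :=
  sInf {n | HasTotalColoring G n}

/-- A `κ`-deletion-minimal graph: maximum degree at most `κ - 1`, total chromatic
number greater than `κ`, but every proper subgraph has total chromatic number at most `κ`. -/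
def DeletionMinimal (κ : ℕ) (G : SimpleGraph V) : Prop :=
  (∀ v : V, deg G v ≤ κ - 1) ∧ κ < totalChromaticNumber G ∧
  ∀ H : SimpleGraph V, H < G → totalChromaticNumber H ≤ κ

/-!
Delete the edge `uv` and take a `κ`-total coloring of the remaining proper subgraph. The edge `uv`
sees at most `(deg u - 1) + (deg v - 1)` edge colors and the color of `u`, fewer than `κ` colors in
all when `deg u + deg v ≤ κ`, so it can be colored. Then recolor `v`: it only has to avoid the
colors of its `deg v` neighbors and `deg v` incident edges, and `2 deg v < κ`. This gives a
`κ`-total coloring of `G`, contradicting `κ < χ''(G)`.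
-/

section

open Function

variable {α : Type*} {G : SimpleGraph V}

lemma Set.exists_notMem_of_ncard_lt_card {F : Set α} (h : F.ncard < Nat.card α) :
    ∃ c, c ∉ F := by
  by_contra! hF
  rw [Set.eq_univ_of_forall hF, Set.ncard_univ] at h
  exact lt_irrefl _ h

lemma ncard_incidenceSet (G : SimpleGraph V) (v : V) : (G.incidenceSet v).ncard = deg G v := by
  classical
  exact Nat.card_congr (G.incidenceSetEquivNeighborSet v)

lemma incidenceSet_deleteEdges_singleton (G : SimpleGraph V) (u v : V) :
    (G.deleteEdges {s(u, v)}).incidenceSet u = G.incidenceSet u \ {s(u, v)} := by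
  ext e
  simp only [incidenceSet, edgeSet_deleteEdges, Set.mem_sdiff, Set.mem_ofPred_eq]
  tauto

lemma ncard_incidenceSet_deleteEdges_add_one [Finite V] {u v : V} (huv : G.Adj u v) :
    ((G.deleteEdges {s(u, v)}).incidenceSet u).ncard + 1 = deg G u := by
  rw [incidenceSet_deleteEdges_singleton, Set.ncard_sdiff_singleton_add_one, ncard_incidenceSet]
  exact G.mk'_mem_incidenceSet_left_iff.mpr huv

lemma exists_hasTotalColoring [Finite V] (G : SimpleGraph V) : ∃ n, HasTotalColoring G n := by
  obtain ⟨n, ⟨e⟩⟩ := Finite.exists_equiv_fin (V ⊕ Sym2 V)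
  refine ⟨n, e ∘ Sum.inl, e ∘ Sum.inr, ?_, ?_, ?_⟩
  · intro a b hab h
    exact hab.ne (Sum.inl_injective (e.injective h))
  · intro e₁ e₂ _ _ hne _ h
    exact hne (Sum.inr_injective (e.injective h))
  · intro w f _ _ h
    exact Sum.inl_ne_inr (e.injective h)

lemma HasTotalColoring.mono {n m : ℕ} (h : HasTotalColoring G n) (hnm : n ≤ m) :
    HasTotalColoring G m := by
  obtain ⟨fv, fe, hV, hE, hVE⟩ := h
  have hinj := Fin.castLE_injective hnm
  exact ⟨Fin.castLE hnm ∘ fv, Fin.castLE hnm ∘ fe,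
    fun a b hab h ↦ hV a b hab (hinj h),
    fun e₁ e₂ he₁ he₂ hne hw h ↦ hE e₁ e₂ he₁ he₂ hne hw (hinj h),
    fun w e he hw h ↦ hVE w e he hw (hinj h)⟩

lemma hasTotalColoring_of_totalChromaticNumber_le [Finite V] {κ : ℕ}
    (h : totalChromaticNumber G ≤ κ) : HasTotalColoring G κ :=
  HasTotalColoring.mono (Nat.sInf_mem (exists_hasTotalColoring G)) h

/-- The conditions of a total coloring that do not involve the color of `v`. -/
def IsTotalColoringOff (G : SimpleGraph V) (v : V) (fv : V → α) (fe : Sym2 V → α) : Prop :=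
  (∀ a b : V, G.Adj a b → a ≠ v → b ≠ v → fv a ≠ fv b) ∧
  (∀ e₁ e₂ : Sym2 V, e₁ ∈ G.edgeSet → e₂ ∈ G.edgeSet → e₁ ≠ e₂ →
      (∃ w : V, w ∈ e₁ ∧ w ∈ e₂) → fe e₁ ≠ fe e₂) ∧
  (∀ (w : V) (e : Sym2 V), e ∈ G.edgeSet → w ∈ e → w ≠ v → fv w ≠ fe e)

lemma IsTotalColoring.isTotalColoringOff {fv : V → α} {fe : Sym2 V → α}
    (h : IsTotalColoring G fv fe) (v : V) : IsTotalColoringOff G v fv fe :=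
  ⟨fun a b hab _ _ ↦ h.1 a b hab, h.2.1, fun w e he hw _ ↦ h.2.2 w e he hw⟩

lemma IsTotalColoringOff.of_deleteEdges [DecidableEq V] {fv : V → α} {fe : Sym2 V → α}
    {u v : V} {c : α} (h : IsTotalColoringOff (G.deleteEdges {s(u, v)}) v fv fe) (hu : fv u ≠ c)
    (hc : ∀ e ∈ (G.deleteEdges {s(u, v)}).incidenceSet u ∪
      (G.deleteEdges {s(u, v)}).incidenceSet v, fe e ≠ c) :
    IsTotalColoringOff G v fv (update fe s(u, v) c) := by
  obtain ⟨hV, hE, hVE⟩ := h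
  have mem_edgeSet {e} (he : e ∈ G.edgeSet) (hne : e ≠ s(u, v)) :
      e ∈ (G.deleteEdges {s(u, v)}).edgeSet := by
    simpa [edgeSet_deleteEdges] using ⟨he, hne⟩
  have hnew {e w} (he : e ∈ G.edgeSet) (hne : e ≠ s(u, v)) (hw : w ∈ e)
      (hwuv : w ∈ s(u, v)) :
      update fe s(u, v) c e ≠ c := by
    rw [update_of_ne hne]
    rcases Sym2.mem_iff.mp hwuv with rfl | rfl
    · exact hc e (Or.inl ⟨mem_edgeSet he hne, hw⟩)
    · exact hc e (Or.inr ⟨mem_edgeSet he hne, hw⟩)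
  refine ⟨fun a b hab ha hb ↦ hV a b ?_ ha hb, ?_, fun w e he hw hwv ↦ ?_⟩
  · refine deleteEdges_adj.mpr ⟨hab, fun h ↦ ?_⟩
    have hv : v ∈ s(a, b) := (Set.mem_singleton_iff.mp h) ▸ Sym2.mem_mk_right u v
    exact (Sym2.mem_iff.mp hv).elim (fun h ↦ ha h.symm) (fun h ↦ hb h.symm)
  · rintro e₁ e₂ he₁ he₂ hne ⟨w, hw₁, hw₂⟩
    rcases eq_or_ne e₁ s(u, v) with rfl | h₁
    · rw [update_self]
      exact (hnew he₂ (Ne.symm hne) hw₂ hw₁).symm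
    rcases eq_or_ne e₂ s(u, v) with rfl | h₂
    · rw [update_self]
      exact hnew he₁ h₁ hw₁ hw₂
    rw [update_of_ne h₁, update_of_ne h₂]
    exact hE e₁ e₂ (mem_edgeSet he₁ h₁) (mem_edgeSet he₂ h₂) hne ⟨w, hw₁, hw₂⟩
  · rcases eq_or_ne e s(u, v) with rfl | hne
    · rw [update_self]
      rcases Sym2.mem_iff.mp hw with rfl | rfl
      · exact hu
      · exact absurd rfl hwv
    rw [update_of_ne hne]
    exact hVE w e (mem_edgeSet he hne) hw hwv

lemma IsTotalColoringOff.update [DecidableEq V] {fv : V → α} {fe : Sym2 V → α} {v : V}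
    {d : α} (h : IsTotalColoringOff G v fv fe) (hnbr : ∀ w ∈ G.neighborSet v, fv w ≠ d)
    (hinc : ∀ e ∈ G.incidenceSet v, fe e ≠ d) :
    IsTotalColoring G (update fv v d) fe := by
  obtain ⟨hV, hE, hVE⟩ := h
  refine ⟨fun a b hab ↦ ?_, hE, fun w e he hw ↦ ?_⟩
  · rcases eq_or_ne a v with rfl | ha
    · rw [update_self, update_of_ne hab.ne']
      exact (hnbr b hab).symm
    rcases eq_or_ne b v with rfl | hb
    · rw [update_self, update_of_ne ha]
      exact hnbr a hab.symm
    rw [update_of_ne ha, update_of_ne hb]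
    exact hV a b hab ha hb
  · rcases eq_or_ne w v with rfl | hwv
    · rw [update_self]
      exact (hinc e ⟨he, hw⟩).symm
    rw [update_of_ne hwv]
    exact hVE w e he hw hwv

lemma deg_pos_of_adj [Finite V] {u v : V} (huv : G.Adj u v) : 0 < deg G u :=
  (Set.ncard_pos).mpr ⟨v, huv⟩

lemma deleteEdges_singleton_lt {u v : V} (huv : G.Adj u v) : G.deleteEdges {s(u, v)} < G :=
  (deleteEdges_le _).lt_of_ne (by simpa using huv)

theorem HasTotalColoring.of_deleteEdges [Finite V] {κ : ℕ} {u v : V} (huv : G.Adj u v)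
    (hsum : deg G u + deg G v ≤ κ) (hv : 2 * deg G v < κ)
    (h : HasTotalColoring (G.deleteEdges {s(u, v)}) κ) : HasTotalColoring G κ := by
  classical
  obtain ⟨fv, fe, hcol⟩ := h
  set H := G.deleteEdges {s(u, v)}
  obtain ⟨c, hc⟩ : ∃ c, c ∉ fe '' (H.incidenceSet u ∪ H.incidenceSet v) ∪ {fv u} := by
    apply Set.exists_notMem_of_ncard_lt_card
    have hu : (H.incidenceSet u).ncard + 1 = deg G u :=
      ncard_incidenceSet_deleteEdges_add_one huv
    have hv' : (H.incidenceSet v).ncard + 1 = deg G v := by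
      rw [show H = G.deleteEdges {s(v, u)} by rw [Sym2.eq_swap]]
      exact ncard_incidenceSet_deleteEdges_add_one huv.symm
    calc (fe '' (H.incidenceSet u ∪ H.incidenceSet v) ∪ {fv u}).ncard
        ≤ (fe '' (H.incidenceSet u ∪ H.incidenceSet v)).ncard + 1 := by
          simpa using Set.ncard_union_le _ {fv u}
      _ ≤ (H.incidenceSet u ∪ H.incidenceSet v).ncard + 1 := by gcongr; exact Set.ncard_image_le
      _ ≤ (H.incidenceSet u).ncard + (H.incidenceSet v).ncard + 1 := by
          gcongr; exact Set.ncard_union_le _ _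
      _ < Nat.card (Fin κ) := by rw [Nat.card_fin]; omega
  set fe' := update fe s(u, v) c
  obtain ⟨d, hd⟩ : ∃ d, d ∉ fv '' G.neighborSet v ∪ fe' '' G.incidenceSet v := by
    apply Set.exists_notMem_of_ncard_lt_card
    calc _ ≤ (fv '' G.neighborSet v).ncard + (fe' '' G.incidenceSet v).ncard :=
          Set.ncard_union_le _ _
      _ ≤ deg G v + deg G v :=
          add_le_add Set.ncard_image_le (ncard_incidenceSet G v ▸ Set.ncard_image_le)
      _ < Nat.card (Fin κ) := by rw [Nat.card_fin]; omega
  have hoff : IsTotalColoringOff G v fv fe' :=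
    (hcol.isTotalColoringOff v).of_deleteEdges (fun h ↦ hc (Or.inr h.symm))
      (fun e he h ↦ hc (Or.inl ⟨e, he, h⟩))
  exact ⟨_, _, hoff.update (fun w hw h ↦ hd (Or.inl ⟨w, hw, h⟩))
    (fun e he h ↦ hd (Or.inr ⟨e, he, h⟩))⟩

end

/-- in a κ-deletion-minimal graph, adjacent vertices `u, v` with
`deg v ≤ ⌊(κ-1)/2⌋` satisfy `deg u + deg v ≥ κ + 1`. -/
theorem stmt_3 {V : Type*} [Fintype V] (κ : ℕ) (G : SimpleGraph V)
    (hG : DeletionMinimal κ G) (u v : V) (huv : G.Adj u v)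
    (hv : deg G v ≤ (κ - 1) / 2) :
    κ + 1 ≤ deg G u + deg G v := by
  obtain ⟨-, hχ, hmin⟩ := hG
  by_contra! hsum
  have hv_pos := deg_pos_of_adj huv.symm
  have hcol : HasTotalColoring G κ :=
    HasTotalColoring.of_deleteEdges huv (by omega) (by omega)
      (hasTotalColoring_of_totalChromaticNumber_le (hmin _ (deleteEdges_singleton_lt huv)))
  exact (Nat.sInf_le hcol).not_gt hχ
end

section
/- The triangle K₃ is totally 3-choosable: for any assignment of lists of size 3 to the three vertices and three edges of a triangle, there is a total coloring choosing each element's color from its list. -/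
open SimpleGraph

variable {V : Type*}

open Finset

/-!
The total graph of `K₃` is the octahedron `K₂,₂,₂`: a vertex conflicts with every other element
except the edge opposite to it. The cocktail-party graph `K₂,…,₂` with `n` parts is
`n`-choosable (Erdős–Rubin–Taylor). If the two lists of some part share a colour, give it to
both and induct on the remaining parts with that colour deleted from every list. Otherwise the
two lists of every part are disjoint and Hall's condition holds for all `2n` lists at once: a
set of elements containing a whole part sees at least `2n` colours, and any other set has at
most `n` elements.
-/

section CocktailParty

variable {ι α : Type*} [Fintype ι] [DecidableEq α]

theorem exists_injective_of_disjoint_pairs (L : ι × Bool → Finset α)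
    (hdisj : ∀ i, Disjoint (L (i, false)) (L (i, true)))
    (hL : ∀ x, Fintype.card ι ≤ #(L x)) :
    ∃ f : ι × Bool → α, Function.Injective f ∧ ∀ x, f x ∈ L x := by
  rw [← all_card_le_biUnion_card_iff_exists_injective]
  intro S
  by_cases hpair : ∃ i, (i, false) ∈ S ∧ (i, true) ∈ S
  · obtain ⟨i, hf, ht⟩ := hpair
    calc #S ≤ Fintype.card (ι × Bool) := card_le_univ S
      _ = Fintype.card ι + Fintype.card ι := by simp [mul_two]
      _ ≤ #(L (i, false)) + #(L (i, true)) := add_le_add (hL _) (hL _)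
      _ = #(L (i, false) ∪ L (i, true)) := (card_union_of_disjoint (hdisj i)).symm
      _ ≤ #(S.biUnion L) :=
        card_le_card (union_subset (subset_biUnion_of_mem L hf) (subset_biUnion_of_mem L ht))
  · obtain rfl | ⟨x, hx⟩ := S.eq_empty_or_nonempty
    · simp
    have hinj : Set.InjOn Prod.fst (S : Set (ι × Bool)) := by
      rintro ⟨i, b⟩ hib ⟨j, b'⟩ hjb' (rfl : i = j)
      cases b <;> cases b' <;> simp_all
    calc #S ≤ #(univ : Finset ι) := card_le_card_of_injOn Prod.fst (fun _ _ ↦ mem_univ _) hinj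
      _ ≤ #(L x) := hL x
      _ ≤ #(S.biUnion L) := card_le_card (subset_biUnion_of_mem L hx)

theorem exists_cocktailParty_listColoring (L : ι × Bool → Finset α)
    (hL : ∀ x, Fintype.card ι ≤ #(L x)) :
    ∃ f : ι × Bool → α, (∀ x, f x ∈ L x) ∧ ∀ x y, x.1 ≠ y.1 → f x ≠ f y := by
  classical
  induction hn : Fintype.card ι using Nat.strong_induction_on generalizing ι with
  | _ n ih =>
  subst hn
  by_cases hshared : ∃ i, ∃ c ∈ L (i, false), c ∈ L (i, true)
  · obtain ⟨i, c, hcf, hct⟩ := hshared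
    have hcard : Fintype.card {j // j ≠ i} = Fintype.card ι - 1 := by simp
    obtain ⟨g, hgL, hg⟩ := ih _ (by have := Fintype.card_pos_iff.2 ⟨i⟩; omega)
      (fun x ↦ (L (x.1.1, x.2)).erase c)
      (fun x ↦ hcard ▸ (Nat.sub_le_sub_right (hL _) 1).trans pred_card_le_card_erase) hcard
    refine ⟨fun x ↦ if h : x.1 = i then c else g (⟨x.1, h⟩, x.2), ?_, ?_⟩
    · rintro ⟨j, b⟩
      by_cases hj : j = i
      · subst hj; cases b <;> simpa
      · simpa [hj] using mem_of_mem_erase (hgL (⟨j, hj⟩, b))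
    · rintro ⟨j, b⟩ ⟨k, b'⟩ (hjk : j ≠ k)
      by_cases hj : j = i <;> by_cases hk : k = i
      · exact absurd (hj.trans hk.symm) hjk
      · simpa [hj, hk] using (ne_of_mem_erase (hgL (⟨k, hk⟩, b'))).symm
      · simpa [hj, hk] using ne_of_mem_erase (hgL (⟨j, hj⟩, b))
      · simpa [hj, hk] using hg (⟨j, hj⟩, b) (⟨k, hk⟩, b') (by simpa using hjk)
  · push Not at hshared
    obtain ⟨f, hf, hfL⟩ := exists_injective_of_disjoint_pairs L
      (fun i ↦ disjoint_left.2 (hshared i)) hL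
    exact ⟨f, hfL, fun x y hxy ↦ hf.ne (ne_of_apply_ne Prod.fst hxy)⟩

end CocktailParty

section Triangle

def oppositeEdge (v : Fin 3) : Sym2 (Fin 3) := s(v + 1, v + 2)

/-- The vertices of `K₃` sum to `0` in `Fin 3`, so the vertex missing from `s(a, b)` is
`-(a + b)`. -/
def oppositeVertex : Sym2 (Fin 3) → Fin 3 :=
  Sym2.lift ⟨fun a b ↦ -(a + b), fun a b ↦ neg_inj.2 (add_comm a b)⟩

theorem oppositeEdge_mem_edgeSet (v : Fin 3) :
    oppositeEdge v ∈ (⊤ : SimpleGraph (Fin 3)).edgeSet := by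
  revert v
  decide

theorem oppositeEdge_oppositeVertex :
    ∀ e ∈ (⊤ : SimpleGraph (Fin 3)).edgeSet, oppositeEdge (oppositeVertex e) = e := by
  simp only [edgeSet_top, Set.mem_compl_iff, Sym2.mem_diagSet]
  decide

theorem ne_oppositeVertex_of_mem :
    ∀ e ∈ (⊤ : SimpleGraph (Fin 3)).edgeSet, ∀ v ∈ e, v ≠ oppositeVertex e := by
  simp only [edgeSet_top, Set.mem_compl_iff, Sym2.mem_diagSet]
  decide

end Triangle

/-- the triangle `K₃` is totally 3-choosable. -/
theorem stmt_7 {α : Type*} (Lv : Fin 3 → Finset α) (Le : Sym2 (Fin 3) → Finset α)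
    (hLv : ∀ v : Fin 3, 3 ≤ (Lv v).card)
    (hLe : ∀ e ∈ (⊤ : SimpleGraph (Fin 3)).edgeSet, 3 ≤ (Le e).card) :
    ∃ (fv : Fin 3 → α) (fe : Sym2 (Fin 3) → α),
      (∀ v : Fin 3, fv v ∈ Lv v) ∧
      (∀ e ∈ (⊤ : SimpleGraph (Fin 3)).edgeSet, fe e ∈ Le e) ∧
      IsTotalColoring (⊤ : SimpleGraph (Fin 3)) fv fe := by
  classical
  obtain ⟨f, hfL, hf⟩ := exists_cocktailParty_listColoring
    (fun x ↦ if x.2 then Le (oppositeEdge x.1) else Lv x.1) (by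
      rintro ⟨v, _ | _⟩
      · simpa using hLv v
      · simpa using hLe _ (oppositeEdge_mem_edgeSet v))
  have hopp := oppositeEdge_oppositeVertex
  refine ⟨fun v ↦ f (v, false), fun e ↦ f (oppositeVertex e, true),
    fun v ↦ by simpa using hfL (v, false),
    fun e he ↦ by simpa [hopp e he] using hfL (oppositeVertex e, true), ?_, ?_, ?_⟩
  · exact fun u v huv ↦ hf _ _ huv.ne
  · rintro e₁ e₂ he₁ he₂ hne -
    exact hf _ _ fun (h : oppositeVertex e₁ = oppositeVertex e₂) ↦
      hne (by rw [← hopp e₁ he₁, ← hopp e₂ he₂, h])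
  · exact fun v e he hv ↦ hf _ _ (ne_oppositeVertex_of_mem e he v hv)
end

section
/- Let κ = 2τ and let G be a κ-deletion-minimal graph with respect to total coloring. Then no edge uv with deg_G(u) = deg_G(v) = τ is contained in a triangle of G. -/
/-!
Delete the edge `uv` and take a total `2τ`-colouring of the rest. To colour `G` it suffices to
give `u` a new colour `c` and `uv` a colour `d`, where `d` avoids the colour of `v` and the
`2τ - 2` colours of the other edges at `u` and `v`, while `c` avoids `d`, the colour of `v` and
the `2τ - 2` colours of the other neighbours of and edges at `u`. Only the last count can reach
`2τ`, and the common neighbour `w` forces a coincidence: if its colour is on an edge at `u`, the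
neighbour and edge colours at `u` overlap; if it is on no edge at `u` or `v`, it serves as `d`
(it is already forbidden for `c`). The remaining case is the first one with `u` and `v` swapped.
-/

open SimpleGraph

variable {V : Type*}

lemma Set.exists_notMem_of_ncard_lt_card_s9 {α : Type*} [Finite α] {s : Set α}
    (h : s.ncard < Nat.card α) : ∃ x, x ∉ s := by
  by_contra! hs
  exact h.ne (by rw [Set.eq_univ_of_forall hs, Set.ncard_univ])

lemma exists_pair_notMem_of_ncard_lt {α : Type*} [Finite α] {N Eu Ev : Set α} {a b : α}
    (hNE : N.ncard + Eu.ncard + 1 < Nat.card α) (hEE : Eu.ncard + Ev.ncard + 1 < Nat.card α)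
    (haN : a ∈ N) (hab : a ≠ b) (ha : a ∈ Eu ∨ a ∉ Ev) :
    ∃ c d, c ∉ N ∧ c ∉ Eu ∧ c ≠ b ∧ c ≠ d ∧ d ∉ Eu ∧ d ∉ Ev ∧ d ≠ b := by
  have hNEb := Set.ncard_insert_le b (N ∪ Eu)
  have hNEu := Set.ncard_union_le N Eu
  by_cases haE : a ∈ Eu
  · obtain ⟨d, hd⟩ := Set.exists_notMem_of_ncard_lt_card_s9 (s := insert b (Eu ∪ Ev)) <| by
      have := Set.ncard_insert_le b (Eu ∪ Ev)
      have := Set.ncard_union_le Eu Ev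
      omega
    obtain ⟨c, hc⟩ := Set.exists_notMem_of_ncard_lt_card_s9 (s := insert d (insert b (N ∪ Eu))) <| by
      have := Set.ncard_insert_le d (insert b (N ∪ Eu))
      have := Set.ncard_union_add_ncard_inter N Eu
      have := (Set.ncard_pos (s := N ∩ Eu)).2 ⟨a, haN, haE⟩
      omega
    simp only [Set.mem_insert_iff, Set.mem_union, not_or] at hc hd
    exact ⟨c, d, hc.2.2.1, hc.2.2.2, hc.2.1, hc.1, hd.2.1, hd.2.2, hd.1⟩
  · obtain ⟨c, hc⟩ := Set.exists_notMem_of_ncard_lt_card_s9 (s := insert b (N ∪ Eu)) (by omega)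
    simp only [Set.mem_insert_iff, Set.mem_union, not_or] at hc
    exact ⟨c, a, hc.2.1, hc.2.2, hc.1, fun h => hc.2.1 (h ▸ haN), haE, ha.resolve_left haE, hab⟩

namespace SimpleGraph

variable {G : SimpleGraph V}

lemma HasTotalColoring.mono {n m : ℕ} (h : HasTotalColoring G n) (hnm : n ≤ m) :
    HasTotalColoring G m := by
  obtain ⟨fv, fe, hadj, hedge, hinc⟩ := h
  have hinj := Fin.castLE_injective hnm
  exact ⟨Fin.castLE hnm ∘ fv, Fin.castLE hnm ∘ fe, fun a b hab h => hadj a b hab (hinj h),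
    fun e₁ e₂ h₁ h₂ hne hw h => hedge e₁ e₂ h₁ h₂ hne hw (hinj h),
    fun x e he hx h => hinc x e he hx (hinj h)⟩

lemma hasTotalColoring_card_sum [Finite V] (G : SimpleGraph V) :
    HasTotalColoring G (Nat.card (V ⊕ Sym2 V)) := by
  let e := Finite.equivFin (V ⊕ Sym2 V)
  refine ⟨fun v => e (.inl v), fun s => e (.inr s), ?_, ?_, ?_⟩
  · exact fun a b hab h => hab.ne (by simpa using e.injective h)
  · exact fun e₁ e₂ _ _ hne _ h => hne (by simpa using e.injective h)
  · exact fun x s _ _ h => by simpa using e.injective h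

lemma hasTotalColoring_of_totalChromaticNumber_le [Finite V] {n : ℕ}
    (h : totalChromaticNumber G ≤ n) : HasTotalColoring G n :=
  HasTotalColoring.mono (Nat.sInf_mem (s := {n | HasTotalColoring G n})
    ⟨_, G.hasTotalColoring_card_sum⟩) h

lemma deleteEdges_singleton_lt {u v : V} (huv : G.Adj u v) : G.deleteEdges {s(u, v)} < G :=
  lt_of_le_of_ne (deleteEdges_le _) fun h => by
    have : (G.deleteEdges {s(u, v)}).Adj u v := by rw [h]; exact huv
    simp at this

namespace DeletionMinimal

lemma not_hasTotalColoring {κ : ℕ} (hG : DeletionMinimal κ G) : ¬ HasTotalColoring G κ :=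
  fun h => (Nat.sInf_le h).not_gt hG.2.1

lemma hasTotalColoring_deleteEdges [Finite V] {κ : ℕ} (hG : DeletionMinimal κ G) {u v : V}
    (huv : G.Adj u v) :
    HasTotalColoring (G.deleteEdges {s(u, v)}) κ :=
  hasTotalColoring_of_totalChromaticNumber_le (hG.2.2 _ (deleteEdges_singleton_lt huv))

end DeletionMinimal

lemma ncard_incidenceSet (G : SimpleGraph V) (v : V) :
    (G.incidenceSet v).ncard = (G.neighborSet v).ncard := by
  classical
  exact Nat.card_congr (G.incidenceSetEquivNeighborSet v)

lemma ncard_neighborSet_deleteEdges_add_one [Finite V] {u v : V} (huv : G.Adj u v) :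
    ((G.deleteEdges {s(u, v)}).neighborSet u).ncard + 1 = deg G u := by
  have hN : (G.deleteEdges {s(u, v)}).neighborSet u = G.neighborSet u \ {v} := by
    ext x
    simp [deleteEdges_adj, huv.ne, and_comm, eq_comm]
  rw [hN, deg]
  exact Set.ncard_sdiff_singleton_add_one huv

section Recolor

variable {α : Type*} [DecidableEq V] {fv : V → α} {fe : Sym2 V → α}

lemma IsTotalColoring.update_vertex (h : IsTotalColoring G fv fe) {u : V} {c : α}
    (hN : c ∉ fv '' G.neighborSet u) (hE : c ∉ fe '' G.incidenceSet u) :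
    IsTotalColoring G (Function.update fv u c) fe := by
  refine ⟨fun a b hab => ?_, h.2.1, fun x e he hx => ?_⟩
  · simp only [Function.update_apply]
    split_ifs with ha hb hb
    · exact absurd (ha.trans hb.symm) hab.ne
    · exact fun hc => hN ⟨b, ha ▸ hab, hc.symm⟩
    · exact fun hc => hN ⟨a, hb ▸ hab.symm, hc⟩
    · exact h.1 a b hab
  · simp only [Function.update_apply]
    split_ifs with hxu
    · exact fun hc => hE ⟨e, ⟨he, hxu ▸ hx⟩, hc.symm⟩
    · exact h.2.2 x e he hx

lemma IsTotalColoring.of_deleteEdges {u v : V}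
    (h : IsTotalColoring (G.deleteEdges {s(u, v)}) fv fe) {d : α}
    (hdu : d ∉ fe '' (G.deleteEdges {s(u, v)}).incidenceSet u)
    (hdv : d ∉ fe '' (G.deleteEdges {s(u, v)}).incidenceSet v)
    (hud : fv u ≠ d) (hvd : fv v ≠ d) (huv : fv u ≠ fv v) :
    IsTotalColoring G fv (Function.update fe s(u, v) d) := by
  have hdel : ∀ e ∈ G.edgeSet, e ≠ s(u, v) → e ∈ (G.deleteEdges {s(u, v)}).edgeSet :=
    fun e he hne => by simpa [edgeSet_deleteEdges] using ⟨he, hne⟩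
  have hd : ∀ e ∈ G.edgeSet, e ≠ s(u, v) → ∀ z ∈ e, z ∈ s(u, v) → d ≠ fe e := by
    intro e he hne z hze hz hde
    rcases Sym2.mem_iff.1 hz with rfl | rfl
    exacts [hdu ⟨e, ⟨hdel e he hne, hze⟩, hde.symm⟩, hdv ⟨e, ⟨hdel e he hne, hze⟩, hde.symm⟩]
  refine ⟨fun a b hab => ?_, fun e₁ e₂ he₁ he₂ hne ⟨z, hz₁, hz₂⟩ => ?_, fun x e he hx => ?_⟩
  · by_cases he : s(a, b) = s(u, v)
    · rcases Sym2.eq_iff.1 he with ⟨rfl, rfl⟩ | ⟨rfl, rfl⟩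
      exacts [huv, huv.symm]
    · exact h.1 a b (deleteEdges_adj.2 ⟨hab, he⟩)
  · simp only [Function.update_apply]
    split_ifs with h₁ h₂ h₂
    · exact absurd (h₁.trans h₂.symm) hne
    · exact hd e₂ he₂ h₂ z hz₂ (h₁ ▸ hz₁)
    · exact (hd e₁ he₁ h₁ z hz₁ (h₂ ▸ hz₂)).symm
    · exact h.2.1 e₁ e₂ (hdel e₁ he₁ h₁) (hdel e₂ he₂ h₂) hne ⟨z, hz₁, hz₂⟩
  · simp only [Function.update_apply]
    split_ifs with he'
    · rcases Sym2.mem_iff.1 (he' ▸ hx) with rfl | rfl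
      exacts [hud, hvd]
    · exact h.2.2 x e (hdel e he he') hx

end Recolor

lemma hasTotalColoring_of_deleteEdges_of_adj_adj [Finite V] {τ : ℕ} {u v w : V}
    (huv : G.Adj u v) (hu : deg G u = τ) (hv : deg G v = τ) (huw : G.Adj u w) (hvw : G.Adj v w)
    {fv : V → Fin (2 * τ)} {fe : Sym2 V → Fin (2 * τ)}
    (h : IsTotalColoring (G.deleteEdges {s(u, v)}) fv fe)
    (hw : fv w ∈ fe '' (G.deleteEdges {s(u, v)}).incidenceSet u ∨
      fv w ∉ fe '' (G.deleteEdges {s(u, v)}).incidenceSet v) :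
    HasTotalColoring G (2 * τ) := by
  classical
  set H := G.deleteEdges {s(u, v)} with hH
  have hHu : (H.neighborSet u).ncard + 1 = τ := hu ▸ ncard_neighborSet_deleteEdges_add_one huv
  have hHv : (H.neighborSet v).ncard + 1 = τ := by
    rw [hH, Sym2.eq_swap]; exact hv ▸ ncard_neighborSet_deleteEdges_add_one huv.symm
  have hNu := Set.ncard_image_le (f := fv) (s := H.neighborSet u)
  have hEu := (Set.ncard_image_le (f := fe) (s := H.incidenceSet u)).trans_eq
    (H.ncard_incidenceSet u)
  have hEv := (Set.ncard_image_le (f := fe) (s := H.incidenceSet v)).trans_eq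
    (H.ncard_incidenceSet v)
  have hHuw : H.Adj u w := deleteEdges_adj.2 ⟨huw, by simp [hvw.ne', huv.ne]⟩
  have hHvw : H.Adj v w := deleteEdges_adj.2 ⟨hvw, by simp [huw.ne', huv.ne']⟩
  obtain ⟨c, d, hcN, hcE, hcv, hcd, hdEu, hdEv, hdv⟩ :=
    exists_pair_notMem_of_ncard_lt (N := fv '' H.neighborSet u) (Eu := fe '' H.incidenceSet u)
      (Ev := fe '' H.incidenceSet v) (by rw [Nat.card_fin]; omega) (by rw [Nat.card_fin]; omega)
      ⟨w, hHuw, rfl⟩ (h.1 v w hHvw).symm hw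
  refine ⟨_, _, (h.update_vertex hcN hcE).of_deleteEdges hdEu hdEv ?_ ?_ ?_⟩ <;>
    simp [Function.update_of_ne huv.ne', hcd, hcv, hdv.symm]

end SimpleGraph

/-- for κ = 2τ, in a κ-deletion-minimal graph no edge `uv` with
`deg u = deg v = τ` is contained in a triangle. -/
theorem stmt_9 {V : Type*} [Fintype V] (τ κ : ℕ) (hκ : κ = 2 * τ)
    (G : SimpleGraph V) (hG : DeletionMinimal κ G) (u v w : V)
    (huv : G.Adj u v) (hu : deg G u = τ) (hv : deg G v = τ)
    (huw : G.Adj u w) (hvw : G.Adj v w) : False := by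
  classical
  subst hκ
  obtain ⟨fv, fe, h⟩ := hG.hasTotalColoring_deleteEdges huv
  refine hG.not_hasTotalColoring ?_
  by_cases hw : fv w ∈ fe '' (G.deleteEdges {s(u, v)}).incidenceSet v
  · rw [Sym2.eq_swap] at h hw
    exact hasTotalColoring_of_deleteEdges_of_adj_adj huv.symm hv hu hvw huw h (.inl hw)
  · exact hasTotalColoring_of_deleteEdges_of_adj_adj huv hu hv huw hvw h (.inr hw)
end

section
/- Let κ ≥ 7 and let G be a κ-deletion-minimal graph with respect to total coloring. Suppose the edge ww₂ is contained in two triangles ww₂w₁ and ww₂w₃ with w₁ ≠ w₃. If deg_G(w₁) = 2, then deg_G(w₃) ≥ 4. -/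
open SimpleGraph

variable {V : Type*}

lemma hasTotalColoring_mono {G : SimpleGraph V} {m n : ℕ} (hmn : m ≤ n)
    (h : HasTotalColoring G m) : HasTotalColoring G n := by
  obtain ⟨fv, fe, h1, h2, h3⟩ := h
  refine ⟨Fin.castLE hmn ∘ fv, Fin.castLE hmn ∘ fe, ?_, ?_, ?_⟩
  · intro u v ha heq
    exact h1 u v ha (Fin.castLE_injective hmn heq)
  · intro e₁ e₂ he₁ he₂ hne hsh heq
    exact h2 e₁ e₂ he₁ he₂ hne hsh (Fin.castLE_injective hmn heq)
  · intro v e he hv heq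
    exact h3 v e he hv (Fin.castLE_injective hmn heq)

lemma hasTotalColoring_exists [Fintype V] (G : SimpleGraph V) : ∃ n, HasTotalColoring G n := by
  classical
  refine ⟨Fintype.card V + Fintype.card (Sym2 V),
    fun v => Fin.castAdd _ (Fintype.equivFin V v),
    fun e => Fin.natAdd _ (Fintype.equivFin (Sym2 V) e), ?_, ?_, ?_⟩
  · intro u v ha heq
    apply ha.ne
    have hval := congrArg Fin.val heq
    simp only [Fin.coe_castAdd] at hval
    exact (Fintype.equivFin V).injective (Fin.val_injective hval)
  · intro e₁ e₂ he₁ he₂ hne hsh heq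
    apply hne
    have hval := congrArg Fin.val heq
    simp only [Fin.coe_natAdd] at hval
    exact (Fintype.equivFin (Sym2 V)).injective (Fin.val_injective (by omega))
  · intro v e he hv heq
    have hval := congrArg Fin.val heq
    simp only [Fin.coe_castAdd, Fin.coe_natAdd] at hval
    have := (Fintype.equivFin V v).isLt
    omega

lemma hasTotalColoring_of_chrom_le [Fintype V] {G : SimpleGraph V} {n : ℕ}
    (h : totalChromaticNumber G ≤ n) : HasTotalColoring G n := by
  have hne : {m | HasTotalColoring G m}.Nonempty := hasTotalColoring_exists G
  exact hasTotalColoring_mono h (Nat.sInf_mem hne)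

lemma exists_notin_finset {κ : ℕ} (S : Finset (Fin κ)) (h : S.card < κ) : ∃ a, a ∉ S := by
  by_contra hc
  push_neg at hc
  have hsub : (Finset.univ : Finset (Fin κ)) ⊆ S := fun a _ => hc a
  have := Finset.card_le_card hsub
  simp only [Finset.card_univ, Fintype.card_fin] at this
  omega

lemma pick_ne {κ : ℕ} {S : Finset (Fin κ)} (h : 2 ≤ S.card) (z : Fin κ) :
    ∃ t, t ∈ S ∧ t ≠ z := by
  obtain ⟨b₁, hb₁, b₂, hb₂, hb12⟩ := Finset.one_lt_card.mp (lt_of_lt_of_le one_lt_two h)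
  by_cases hh : b₁ = z
  · exact ⟨b₂, hb₂, by rw [← hh]; exact fun h2 => hb12 h2.symm⟩
  · exact ⟨b₁, hb₁, hh⟩

lemma L1 {κ : ℕ} (A B : Finset (Fin κ)) (s : Fin κ) (hA : 2 ≤ A.card) (hB : 2 ≤ B.card) :
    ∃ γ c₁ δ c₂, γ ∈ A ∧ c₁ ∈ A ∧ δ ∈ B ∧ c₂ ∈ B ∧ γ ≠ c₁ ∧ δ ≠ c₂ ∧ γ ≠ δ ∧ δ ≠ s ∧ c₁ ≠ c₂ := by
  obtain ⟨δ₀, hδ₀B, hδ₀s⟩ := pick_ne hB s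
  obtain ⟨γ₀, hγ₀A, hγ₀δ⟩ := pick_ne hA δ₀
  obtain ⟨c₀, hc₀A, hc₀γ⟩ := pick_ne hA γ₀
  by_cases h : ∃ c ∈ B, c ≠ δ₀ ∧ c ≠ c₀
  · obtain ⟨c₂, hc₂B, hc₂δ, hc₂c⟩ := h
    exact ⟨γ₀, c₀, δ₀, c₂, hγ₀A, hc₀A, hδ₀B, hc₂B, fun hh => hc₀γ hh.symm,
      fun hh => hc₂δ hh.symm, hγ₀δ, hδ₀s, fun hh => hc₂c hh.symm⟩
  · push_neg at h
    obtain ⟨t, htB, hts⟩ := pick_ne hB δ₀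
    have htc : t = c₀ := h t htB hts
    subst htc
    exact ⟨t, γ₀, δ₀, t, hc₀A, hγ₀A, hδ₀B, htB, hc₀γ, fun hh => hts hh.symm, hts, hδ₀s,
      hc₀γ.symm⟩

lemma selection {κ : ℕ} (hκ : 7 ≤ κ) (P Q R : Finset (Fin κ)) (b : Fin κ)
    (hP : P.card ≤ κ - 3) (hQ : Q.card ≤ κ - 3) (hR : R.card ≤ κ - 1)
    (hbP : b ∉ P) (hbQ : b ∉ Q) :
    ∃ β s γ c₁ δ c₂ : Fin κ, β ∉ P ∧ β ∉ Q ∧ s ∉ R ∧ γ ∉ P ∧ c₁ ∉ P ∧ δ ∉ Q ∧ c₂ ∉ Q ∧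
      γ ≠ β ∧ c₁ ≠ β ∧ δ ≠ β ∧ c₂ ≠ β ∧ γ ≠ c₁ ∧ δ ≠ c₂ ∧ γ ≠ δ ∧ γ ≠ s ∧ δ ≠ s ∧ c₁ ≠ c₂ := by
  classical
  have hcard : ∀ (T : Finset (Fin κ)) (z : Fin κ), T.card ≤ κ - 3 →
      2 ≤ (Finset.univ \ insert z T).card := by
    intro T z hT
    rw [Finset.card_sdiff_of_subset (Finset.subset_univ _)]
    have h1 := Finset.card_insert_le z T
    have h2 : (Finset.univ : Finset (Fin κ)).card = κ := by
      simp [Finset.card_univ]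
    omega
  have hmem : ∀ (T : Finset (Fin κ)) (z c : Fin κ),
      c ∈ Finset.univ \ insert z T ↔ (c ≠ z ∧ c ∉ T) := by
    intro T z c
    simp [Finset.mem_sdiff, Finset.mem_insert, not_or]
  have hXcard : 1 ≤ (Finset.univ \ R).card := by
    rw [Finset.card_sdiff_of_subset (Finset.subset_univ _)]
    have h2 : (Finset.univ : Finset (Fin κ)).card = κ := by simp [Finset.card_univ]
    omega
  set A := Finset.univ \ insert b P with hAdef
  set B := Finset.univ \ insert b Q with hBdef
  set X := Finset.univ \ R with hXdef
  by_cases h1 : ∃ s ∈ X, s ∉ A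
  · obtain ⟨s, hsX, hsA⟩ := h1
    obtain ⟨γ, c₁, δ, c₂, hγ, hc₁, hδ, hc₂, e1, e2, e3, e4, e5⟩ := L1 A B s (hcard P b hP) (hcard Q b hQ)
    have hγ' := (hmem P b γ).mp hγ
    have hc₁' := (hmem P b c₁).mp hc₁
    have hδ' := (hmem Q b δ).mp hδ
    have hc₂' := (hmem Q b c₂).mp hc₂
    have hsR : s ∉ R := (Finset.mem_sdiff.mp hsX).2
    exact ⟨b, s, γ, c₁, δ, c₂, hbP, hbQ, hsR, hγ'.2, hc₁'.2, hδ'.2, hc₂'.2,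
      hγ'.1, hc₁'.1, hδ'.1, hc₂'.1, e1, e2, e3, fun hh => hsA (hh ▸ hγ), e4, e5⟩
  by_cases h2 : ∃ s ∈ X, s ∉ B
  · obtain ⟨s, hsX, hsB⟩ := h2
    obtain ⟨γ', c₁', δ', c₂', hγ, hc₁, hδ, hc₂, e1, e2, e3, e4, e5⟩ :=
      L1 B A s (hcard Q b hQ) (hcard P b hP)
    -- map: γ := δ', c₁ := c₂', δ := γ', c₂ := c₁'
    have hγ'' := (hmem P b δ').mp hδ
    have hc₁'' := (hmem P b c₂').mp hc₂
    have hδ'' := (hmem Q b γ').mp hγ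
    have hc₂'' := (hmem Q b c₁').mp hc₁
    have hsR : s ∉ R := (Finset.mem_sdiff.mp hsX).2
    exact ⟨b, s, δ', c₂', γ', c₁', hbP, hbQ, hsR, hγ''.2, hc₁''.2, hδ''.2, hc₂''.2,
      hγ''.1, hc₁''.1, hδ''.1, hc₂''.1, e2, e1, e3.symm, e4, fun hh => hsB (hh ▸ hγ), e5.symm⟩
  · push_neg at h1 h2
    obtain ⟨r, hrX⟩ := Finset.card_pos.mp (by omega : 0 < X.card)
    have hrA := h1 r hrX
    have hrB := h2 r hrX
    have hrA' := (hmem P b r).mp hrA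
    have hrB' := (hmem Q b r).mp hrB
    have hrR : r ∉ R := (Finset.mem_sdiff.mp hrX).2
    obtain ⟨γ, c₁, δ, c₂, hγ, hc₁, hδ, hc₂, e1, e2, e3, e4, e5⟩ :=
      L1 (Finset.univ \ insert r P) (Finset.univ \ insert r Q) r (hcard P r hP) (hcard Q r hQ)
    have hγ' := (hmem P r γ).mp hγ
    have hc₁' := (hmem P r c₁).mp hc₁
    have hδ' := (hmem Q r δ).mp hδ
    have hc₂' := (hmem Q r c₂).mp hc₂
    exact ⟨r, r, γ, c₁, δ, c₂, hrA'.2, hrB'.2, hrR, hγ'.2, hc₁'.2, hδ'.2, hc₂'.2,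
      hγ'.1, hc₁'.1, hδ'.1, hc₂'.1, e1, e2, e3, hγ'.1, hδ'.1, e5⟩

lemma sym2_ne_of {α : Type*} {a b c d : α} (h1 : a ≠ c ∨ b ≠ d) (h2 : a ≠ d ∨ b ≠ c) :
    s(a, b) ≠ s(c, d) := by
  intro h
  rw [Sym2.eq_iff] at h
  rcases h with ⟨rfl, rfl⟩ | ⟨rfl, rfl⟩
  · rcases h1 with h | h <;> exact h rfl
  · rcases h2 with h | h <;> exact h rfl

/-- for κ ≥ 7, in a κ-deletion-minimal graph, if the edge `ww₂` lies
in the two triangles `ww₂w₁` and `ww₂w₃` (with `w₁ ≠ w₃`) and `deg w₁ = 2`, then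
`deg w₃ ≥ 4`. -/
theorem stmt_12 {V : Type*} [Fintype V] (κ : ℕ) (hκ : 7 ≤ κ) (G : SimpleGraph V)
    (hG : DeletionMinimal κ G) (w w₁ w₂ w₃ : V) (h13 : w₁ ≠ w₃)
    (h2 : G.Adj w w₂) (h1 : G.Adj w w₁) (h3 : G.Adj w w₃)
    (h12 : G.Adj w₂ w₁) (h23 : G.Adj w₂ w₃)
    (hw1 : deg G w₁ = 2) :
    4 ≤ deg G w₃ := by
  classical
  by_contra hcon
  push_neg at hcon
  have hne_w_w1 : w ≠ w₁ := h1.ne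
  have hne_w_w2 : w ≠ w₂ := h2.ne
  have hne_w_w3 : w ≠ w₃ := h3.ne
  have hne_w1_w2 : w₁ ≠ w₂ := h12.ne'
  have hne_w2_w3 : w₂ ≠ w₃ := h23.ne
  have hdeg_eq : ∀ v : V, deg G v = G.degree v := by
    intro v
    unfold deg
    rw [← card_neighborFinset_eq_degree, ← Set.ncard_coe_finset]
    congr 1
    ext u
    simp [mem_neighborFinset]
  have hdegG : ∀ v : V, G.degree v ≤ κ - 1 := fun v => by rw [← hdeg_eq]; exact hG.1 v
  -- neighbors of w₁
  have hsub1 : ({w, w₂} : Finset V) ⊆ G.neighborFinset w₁ := by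
    intro u hu
    simp only [Finset.mem_insert, Finset.mem_singleton] at hu
    rw [mem_neighborFinset]
    rcases hu with rfl | rfl
    · exact h1.symm
    · exact h12.symm
  have hcard2 : ({w, w₂} : Finset V).card = 2 := by
    rw [Finset.card_insert_of_notMem (by simp [hne_w_w2]), Finset.card_singleton]
  have hN1set : ({w, w₂} : Finset V) = G.neighborFinset w₁ := by
    apply Finset.eq_of_subset_of_card_le hsub1
    rw [card_neighborFinset_eq_degree, ← hdeg_eq, hw1, hcard2]
  have hN1 : ∀ u, G.Adj w₁ u → u = w ∨ u = w₂ := by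
    intro u hu
    have : u ∈ ({w, w₂} : Finset V) := by rw [hN1set, mem_neighborFinset]; exact hu
    simpa using this
  -- choose x
  obtain ⟨x, hne_x_w, hne_x_w2, hne_x_w1, hx_or, hN3⟩ :
      ∃ x, x ≠ w ∧ x ≠ w₂ ∧ x ≠ w₁ ∧ (G.Adj w₃ x ∨ x = w₃) ∧
        (∀ u, G.Adj w₃ u → u = w ∨ u = w₂ ∨ u = x) := by
    by_cases hex : ∃ u, G.Adj w₃ u ∧ u ≠ w ∧ u ≠ w₂
    · obtain ⟨x, hadj, hxw, hxw2⟩ := hex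
      have hxw1 : x ≠ w₁ := by
        rintro rfl
        rcases hN1 w₃ hadj.symm with h | h
        · exact hne_w_w3 h.symm
        · exact hne_w2_w3 h.symm
      refine ⟨x, hxw, hxw2, hxw1, Or.inl hadj, ?_⟩
      intro u hu
      by_contra hu3
      push_neg at hu3
      obtain ⟨hu_w, hu_w2, hu_x⟩ := hu3
      have hsubx : ({w, w₂, x, u} : Finset V) ⊆ G.neighborFinset w₃ := by
        intro v hv
        simp only [Finset.mem_insert, Finset.mem_singleton] at hv
        rw [mem_neighborFinset]
        rcases hv with rfl | rfl | rfl | rfl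
        · exact h3.symm
        · exact h23.symm
        · exact hadj
        · exact hu
      have hc4 : ({w, w₂, x, u} : Finset V).card = 4 := by
        have q1 : w ∉ ({w₂, x, u} : Finset V) := by
          simp only [Finset.mem_insert, Finset.mem_singleton]
          push_neg
          exact ⟨hne_w_w2, Ne.symm hxw, Ne.symm hu_w⟩
        have q2 : w₂ ∉ ({x, u} : Finset V) := by
          simp only [Finset.mem_insert, Finset.mem_singleton]
          push_neg
          exact ⟨Ne.symm hxw2, Ne.symm hu_w2⟩
        have q3 : x ∉ ({u} : Finset V) := by
          simp only [Finset.mem_singleton]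
          exact Ne.symm hu_x
        rw [Finset.card_insert_of_notMem q1, Finset.card_insert_of_notMem q2,
          Finset.card_insert_of_notMem q3, Finset.card_singleton]
      have hle4 := Finset.card_le_card hsubx
      rw [hc4, card_neighborFinset_eq_degree, ← hdeg_eq] at hle4
      omega
    · push_neg at hex
      refine ⟨w₃, h3.ne', h23.ne', Ne.symm h13, Or.inr rfl, ?_⟩
      intro u hu
      by_cases hhw : u = w
      · exact Or.inl hhw
      · exact Or.inr (Or.inl (hex u hu hhw))
  -- the subgraph H
  set H : SimpleGraph V := G.deleteEdges {e | w₁ ∈ e ∨ w₃ ∈ e} with hHdef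
  have hHadj : ∀ a b : V, H.Adj a b ↔ (G.Adj a b ∧ a ≠ w₁ ∧ a ≠ w₃ ∧ b ≠ w₁ ∧ b ≠ w₃) := by
    intro a b
    rw [hHdef, deleteEdges_adj]
    simp only [Set.mem_setOf_eq, Sym2.mem_iff, not_or]
    constructor
    · rintro ⟨h, ⟨ha1, hb1⟩, ha3, hb3⟩
      exact ⟨h, fun hh => ha1 hh.symm, fun hh => ha3 hh.symm, fun hh => hb1 hh.symm,
        fun hh => hb3 hh.symm⟩
    · rintro ⟨h, q1, q2, q3, q4⟩
      exact ⟨h, ⟨fun hh => q1 hh.symm, fun hh => q3 hh.symm⟩, fun hh => q2 hh.symm,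
        fun hh => q4 hh.symm⟩
  have hHlt : H < G := by
    refine lt_of_le_of_ne (deleteEdges_le _) ?_
    intro hEq
    have hA : H.Adj w w₁ := by rw [hEq]; exact h1
    exact ((hHadj w w₁).mp hA).2.2.2.1 rfl
  obtain ⟨ψv, ψe, hc1, hc2, hc3⟩ : HasTotalColoring H κ :=
    hasTotalColoring_of_chrom_le (hG.2.2 H hHlt)
  have hH_ww2 : H.Adj w w₂ :=
    (hHadj w w₂).mpr ⟨h2, hne_w_w1, hne_w_w3, Ne.symm hne_w1_w2, hne_w2_w3⟩
  have hww2H : s(w, w₂) ∈ H.edgeSet := H.mem_edgeSet.mpr hH_ww2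
  set Ew : Finset (Fin κ) := (H.neighborFinset w).image (fun u => ψe s(w, u)) with hEwdef
  set Ew2 : Finset (Fin κ) := (H.neighborFinset w₂).image (fun u => ψe s(w₂, u)) with hEw2def
  set Ex : Finset (Fin κ) := (H.neighborFinset x).image (fun u => ψe s(x, u)) with hExdef
  set bcol : Fin κ := ψe s(w, w₂) with hbcoldef
  set P : Finset (Fin κ) := (insert (ψv w) Ew).erase bcol with hPdef
  set Q : Finset (Fin κ) := (insert (ψv w₂) Ew2).erase bcol with hQdef
  set R : Finset (Fin κ) := insert (ψv x) Ex with hRdef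
  have memEw : ∀ e, e ∈ H.edgeSet → w ∈ e → ψe e ∈ Ew := by
    intro e
    induction e using Sym2.ind with
    | _ a b =>
      intro he hm
      rw [H.mem_edgeSet] at he
      rw [Sym2.mem_iff] at hm
      rcases hm with rfl | rfl
      · exact Finset.mem_image.mpr ⟨b, (H.mem_neighborFinset _ _).mpr he, rfl⟩
      · refine Finset.mem_image.mpr ⟨a, (H.mem_neighborFinset _ _).mpr he.symm, ?_⟩
        rw [Sym2.eq_swap]
  have memEw2 : ∀ e, e ∈ H.edgeSet → w₂ ∈ e → ψe e ∈ Ew2 := by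
    intro e
    induction e using Sym2.ind with
    | _ a b =>
      intro he hm
      rw [H.mem_edgeSet] at he
      rw [Sym2.mem_iff] at hm
      rcases hm with rfl | rfl
      · exact Finset.mem_image.mpr ⟨b, (H.mem_neighborFinset _ _).mpr he, rfl⟩
      · refine Finset.mem_image.mpr ⟨a, (H.mem_neighborFinset _ _).mpr he.symm, ?_⟩
        rw [Sym2.eq_swap]
  have memEx : ∀ e, e ∈ H.edgeSet → x ∈ e → ψe e ∈ Ex := by
    intro e
    induction e using Sym2.ind with
    | _ a b =>
      intro he hm
      rw [H.mem_edgeSet] at he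
      rw [Sym2.mem_iff] at hm
      rcases hm with rfl | rfl
      · exact Finset.mem_image.mpr ⟨b, (H.mem_neighborFinset _ _).mpr he, rfl⟩
      · refine Finset.mem_image.mpr ⟨a, (H.mem_neighborFinset _ _).mpr he.symm, ?_⟩
        rw [Sym2.eq_swap]
  have hwmem : w ∈ s(w, w₂) := by rw [Sym2.mem_iff]; left; rfl
  have hw2mem : w₂ ∈ s(w, w₂) := by rw [Sym2.mem_iff]; right; rfl
  have memP : ∀ e, e ∈ H.edgeSet → w ∈ e → e ≠ s(w, w₂) → ψe e ∈ P := by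
    intro e he hm hne
    rw [hPdef]
    refine Finset.mem_erase.mpr ⟨?_, Finset.mem_insert_of_mem (memEw e he hm)⟩
    exact hc2 e s(w, w₂) he hww2H hne ⟨w, hm, hwmem⟩
  have memQ : ∀ e, e ∈ H.edgeSet → w₂ ∈ e → e ≠ s(w, w₂) → ψe e ∈ Q := by
    intro e he hm hne
    rw [hQdef]
    refine Finset.mem_erase.mpr ⟨?_, Finset.mem_insert_of_mem (memEw2 e he hm)⟩
    exact hc2 e s(w, w₂) he hww2H hne ⟨w₂, hm, hw2mem⟩
  have memR : ∀ e, e ∈ H.edgeSet → x ∈ e → ψe e ∈ R := by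
    intro e he hm
    rw [hRdef]
    exact Finset.mem_insert_of_mem (memEx e he hm)
  have hpvwP : ψv w ∈ P := by
    rw [hPdef]
    exact Finset.mem_erase.mpr ⟨hc3 w s(w, w₂) hww2H hwmem, Finset.mem_insert_self _ _⟩
  have hpvw2Q : ψv w₂ ∈ Q := by
    rw [hQdef]
    exact Finset.mem_erase.mpr ⟨hc3 w₂ s(w, w₂) hww2H hw2mem, Finset.mem_insert_self _ _⟩
  have hpvxR : ψv x ∈ R := by rw [hRdef]; exact Finset.mem_insert_self _ _
  -- cardinality bounds
  have hEwcard : Ew.card ≤ κ - 3 := by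
    have q1 : Ew.card ≤ (H.neighborFinset w).card := Finset.card_image_le
    have q2 : H.neighborFinset w ⊆ ((G.neighborFinset w).erase w₁).erase w₃ := by
      intro u hu
      rw [H.mem_neighborFinset] at hu
      obtain ⟨ha, _, _, hb1, hb3⟩ := (hHadj w u).mp hu
      exact Finset.mem_erase.mpr ⟨hb3, Finset.mem_erase.mpr ⟨hb1, (G.mem_neighborFinset _ _).mpr ha⟩⟩
    have q3 := Finset.card_le_card q2
    have q4 : w₃ ∈ (G.neighborFinset w).erase w₁ :=
      Finset.mem_erase.mpr ⟨Ne.symm h13, (G.mem_neighborFinset _ _).mpr h3⟩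
    have q5 : w₁ ∈ G.neighborFinset w := (G.mem_neighborFinset _ _).mpr h1
    rw [Finset.card_erase_of_mem q4, Finset.card_erase_of_mem q5] at q3
    have q6 := hdegG w
    rw [← card_neighborFinset_eq_degree] at q6
    omega
  have hEw2card : Ew2.card ≤ κ - 3 := by
    have q1 : Ew2.card ≤ (H.neighborFinset w₂).card := Finset.card_image_le
    have q2 : H.neighborFinset w₂ ⊆ ((G.neighborFinset w₂).erase w₁).erase w₃ := by
      intro u hu
      rw [H.mem_neighborFinset] at hu
      obtain ⟨ha, _, _, hb1, hb3⟩ := (hHadj w₂ u).mp hu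
      exact Finset.mem_erase.mpr ⟨hb3, Finset.mem_erase.mpr ⟨hb1, (G.mem_neighborFinset _ _).mpr ha⟩⟩
    have q3 := Finset.card_le_card q2
    have q4 : w₃ ∈ (G.neighborFinset w₂).erase w₁ :=
      Finset.mem_erase.mpr ⟨Ne.symm h13, (G.mem_neighborFinset _ _).mpr h23⟩
    have q5 : w₁ ∈ G.neighborFinset w₂ := (G.mem_neighborFinset _ _).mpr h12
    rw [Finset.card_erase_of_mem q4, Finset.card_erase_of_mem q5] at q3
    have q6 := hdegG w₂
    rw [← card_neighborFinset_eq_degree] at q6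
    omega
  have hExcard : Ex.card ≤ κ - 2 := by
    have q1 : Ex.card ≤ (H.neighborFinset x).card := Finset.card_image_le
    rcases hx_or with hadj | heq
    · have q2 : H.neighborFinset x ⊆ (G.neighborFinset x).erase w₃ := by
        intro u hu
        rw [H.mem_neighborFinset] at hu
        obtain ⟨ha, _, _, _, hb3⟩ := (hHadj x u).mp hu
        exact Finset.mem_erase.mpr ⟨hb3, (G.mem_neighborFinset _ _).mpr ha⟩
      have q3 := Finset.card_le_card q2
      have q4 : w₃ ∈ G.neighborFinset x := (G.mem_neighborFinset _ _).mpr hadj.symm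
      rw [Finset.card_erase_of_mem q4] at q3
      have q6 := hdegG x
      rw [← card_neighborFinset_eq_degree] at q6
      omega
    · have q2 : H.neighborFinset x = ∅ := by
        rw [Finset.eq_empty_iff_forall_notMem]
        intro u hu
        rw [H.mem_neighborFinset] at hu
        exact ((hHadj x u).mp hu).2.2.1 heq
      rw [q2] at q1
      simp only [Finset.card_empty] at q1
      omega
  have hbP : bcol ∉ P := by rw [hPdef]; exact Finset.notMem_erase _ _
  have hbQ : bcol ∉ Q := by rw [hQdef]; exact Finset.notMem_erase _ _
  have hPcard : P.card ≤ κ - 3 := by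
    have hb : bcol ∈ insert (ψv w) Ew :=
      Finset.mem_insert_of_mem (memEw s(w, w₂) hww2H hwmem)
    rw [hPdef, Finset.card_erase_of_mem hb]
    have := Finset.card_insert_le (ψv w) Ew
    omega
  have hQcard : Q.card ≤ κ - 3 := by
    have hb : bcol ∈ insert (ψv w₂) Ew2 :=
      Finset.mem_insert_of_mem (memEw2 s(w, w₂) hww2H hw2mem)
    rw [hQdef, Finset.card_erase_of_mem hb]
    have := Finset.card_insert_le (ψv w₂) Ew2
    omega
  have hRcard : R.card ≤ κ - 1 := by
    rw [hRdef]
    have := Finset.card_insert_le (ψv x) Ex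
    omega
  obtain ⟨β, sc, γ, c₁, δ, c₂, hβP, hβQ, hsR, hγP, hc₁P, hδQ, hc₂Q, hγβ, hc₁β, hδβ, hc₂β,
    hγc₁, hδc₂, hγδ, hγs, hδs, hc₁c₂⟩ := selection hκ P Q R bcol hPcard hQcard hRcard hbP hbQ
  -- new vertex colors
  obtain ⟨t₁, ht₁⟩ := exists_notin_finset {ψv w, ψv w₂, c₁, c₂} (by
    have q1 := Finset.card_insert_le (ψv w) ({ψv w₂, c₁, c₂} : Finset (Fin κ))
    have q2 := Finset.card_insert_le (ψv w₂) ({c₁, c₂} : Finset (Fin κ))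
    have q3 := Finset.card_insert_le c₁ ({c₂} : Finset (Fin κ))
    simp only [Finset.card_singleton] at q1 q2 q3
    omega)
  obtain ⟨t₃, ht₃⟩ := exists_notin_finset {ψv w, ψv w₂, ψv x, γ, δ, sc} (by
    have q1 := Finset.card_insert_le (ψv w) ({ψv w₂, ψv x, γ, δ, sc} : Finset (Fin κ))
    have q2 := Finset.card_insert_le (ψv w₂) ({ψv x, γ, δ, sc} : Finset (Fin κ))
    have q3 := Finset.card_insert_le (ψv x) ({γ, δ, sc} : Finset (Fin κ))
    have q4 := Finset.card_insert_le γ ({δ, sc} : Finset (Fin κ))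
    have q5 := Finset.card_insert_le δ ({sc} : Finset (Fin κ))
    simp only [Finset.card_singleton] at q1 q2 q3 q4 q5
    omega)
  have ht₁w : t₁ ≠ ψv w := fun h => ht₁ (by rw [h]; simp)
  have ht₁w2 : t₁ ≠ ψv w₂ := fun h => ht₁ (by rw [h]; simp)
  have ht₁c₁ : t₁ ≠ c₁ := fun h => ht₁ (by rw [h]; simp)
  have ht₁c₂ : t₁ ≠ c₂ := fun h => ht₁ (by rw [h]; simp)
  have ht₃w : t₃ ≠ ψv w := fun h => ht₃ (by rw [h]; simp)
  have ht₃w2 : t₃ ≠ ψv w₂ := fun h => ht₃ (by rw [h]; simp)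
  have ht₃x : t₃ ≠ ψv x := fun h => ht₃ (by rw [h]; simp)
  have ht₃γ : t₃ ≠ γ := fun h => ht₃ (by rw [h]; simp)
  have ht₃δ : t₃ ≠ δ := fun h => ht₃ (by rw [h]; simp)
  have ht₃s : t₃ ≠ sc := fun h => ht₃ (by rw [h]; simp)
  -- pattern inequalities
  have n1 : s(w₁, w₂) ≠ s(w, w₁) := sym2_ne_of (Or.inl (Ne.symm hne_w_w1)) (Or.inr (Ne.symm hne_w_w2))
  have n2 : s(w, w₃) ≠ s(w, w₁) := sym2_ne_of (Or.inr (Ne.symm h13)) (Or.inl hne_w_w1)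
  have n3 : s(w, w₃) ≠ s(w₁, w₂) := sym2_ne_of (Or.inl hne_w_w1) (Or.inl hne_w_w2)
  have n4 : s(w₂, w₃) ≠ s(w, w₁) := sym2_ne_of (Or.inl (Ne.symm hne_w_w2)) (Or.inl (Ne.symm hne_w1_w2))
  have n5 : s(w₂, w₃) ≠ s(w₁, w₂) := sym2_ne_of (Or.inl (Ne.symm hne_w1_w2)) (Or.inr (Ne.symm h13))
  have n6 : s(w₂, w₃) ≠ s(w, w₃) := sym2_ne_of (Or.inl (Ne.symm hne_w_w2)) (Or.inl hne_w2_w3)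
  have n7 : s(w₃, x) ≠ s(w, w₁) := sym2_ne_of (Or.inl (Ne.symm hne_w_w3)) (Or.inl (Ne.symm h13))
  have n8 : s(w₃, x) ≠ s(w₁, w₂) := sym2_ne_of (Or.inl (Ne.symm h13)) (Or.inl (Ne.symm hne_w2_w3))
  have n9 : s(w₃, x) ≠ s(w, w₃) := sym2_ne_of (Or.inl (Ne.symm hne_w_w3)) (Or.inr hne_x_w)
  have n10 : s(w₃, x) ≠ s(w₂, w₃) := sym2_ne_of (Or.inl (Ne.symm hne_w2_w3)) (Or.inr hne_x_w2)
  have n11 : s(w, w₂) ≠ s(w, w₁) := sym2_ne_of (Or.inr (Ne.symm hne_w1_w2)) (Or.inl hne_w_w1)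
  have n12 : s(w, w₂) ≠ s(w₁, w₂) := sym2_ne_of (Or.inl hne_w_w1) (Or.inl hne_w_w2)
  have n13 : s(w, w₂) ≠ s(w, w₃) := sym2_ne_of (Or.inr hne_w2_w3) (Or.inl hne_w_w3)
  have n14 : s(w, w₂) ≠ s(w₂, w₃) := sym2_ne_of (Or.inl hne_w_w2) (Or.inl hne_w_w3)
  have n15 : s(w, w₂) ≠ s(w₃, x) := sym2_ne_of (Or.inl hne_w_w3) (Or.inl (Ne.symm hne_x_w))
  -- the modified coloring
  obtain ⟨fv', hfv'⟩ : ∃ f : V → Fin κ,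
      f = fun v => if v = w₁ then t₁ else if v = w₃ then t₃ else ψv v := ⟨_, rfl⟩
  obtain ⟨fe', hfe'⟩ : ∃ f : Sym2 V → Fin κ,
      f = fun e => if e = s(w, w₁) then c₁ else if e = s(w₁, w₂) then c₂ else
        if e = s(w, w₃) then γ else if e = s(w₂, w₃) then δ else
        if e = s(w₃, x) then sc else if e = s(w, w₂) then β else ψe e := ⟨_, rfl⟩
  have hfv_w1 : fv' w₁ = t₁ := by rw [hfv']; simp
  have hfv_w3 : fv' w₃ = t₃ := by
    rw [hfv']
    beta_reduce
    rw [if_neg (Ne.symm h13), if_pos rfl]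
  have hfv_gen : ∀ v, v ≠ w₁ → v ≠ w₃ → fv' v = ψv v := by
    intro v q1 q3
    rw [hfv']
    beta_reduce
    rw [if_neg q1, if_neg q3]
  have hfe_ww1 : fe' s(w, w₁) = c₁ := by
    rw [hfe']
    beta_reduce
    rw [if_pos rfl]
  have hfe_w1w2 : fe' s(w₁, w₂) = c₂ := by
    rw [hfe']
    beta_reduce
    rw [if_neg n1, if_pos rfl]
  have hfe_ww3 : fe' s(w, w₃) = γ := by
    rw [hfe']
    beta_reduce
    rw [if_neg n2, if_neg n3, if_pos rfl]
  have hfe_w2w3 : fe' s(w₂, w₃) = δ := by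
    rw [hfe']
    beta_reduce
    rw [if_neg n4, if_neg n5, if_neg n6, if_pos rfl]
  have hfe_w3x : fe' s(w₃, x) = sc := by
    rw [hfe']
    beta_reduce
    rw [if_neg n7, if_neg n8, if_neg n9, if_neg n10, if_pos rfl]
  have hfe_ww2 : fe' s(w, w₂) = β := by
    rw [hfe']
    beta_reduce
    rw [if_neg n11, if_neg n12, if_neg n13, if_neg n14, if_neg n15, if_pos rfl]
  have hfe_gen : ∀ e, w₁ ∉ e → w₃ ∉ e → e ≠ s(w, w₂) → fe' e = ψe e := by
    intro e q1 q3 qb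
    rw [hfe']
    beta_reduce
    rw [if_neg (fun h => q1 (by rw [h]; simp)), if_neg (fun h => q1 (by rw [h]; simp)),
      if_neg (fun h => q3 (by rw [h]; simp)), if_neg (fun h => q3 (by rw [h]; simp)),
      if_neg (fun h => q3 (by rw [h]; simp)), if_neg qb]
  -- classification of edges of G
  have hclass : ∀ e, e ∈ G.edgeSet →
      e = s(w, w₂) ∨ e = s(w, w₁) ∨ e = s(w₁, w₂) ∨ e = s(w, w₃) ∨ e = s(w₂, w₃) ∨
      (e = s(w₃, x) ∧ x ≠ w₃) ∨ (e ∈ H.edgeSet ∧ w₁ ∉ e ∧ w₃ ∉ e ∧ e ≠ s(w, w₂)) := by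
    intro e
    induction e using Sym2.ind with
    | _ a b =>
    intro he
    rw [G.mem_edgeSet] at he
    by_cases ha1 : a = w₁
    · subst ha1
      rcases hN1 b he with rfl | rfl
      · exact Or.inr (Or.inl Sym2.eq_swap)
      · exact Or.inr (Or.inr (Or.inl rfl))
    · by_cases hb1 : b = w₁
      · subst hb1
        rcases hN1 a he.symm with rfl | rfl
        · exact Or.inr (Or.inl rfl)
        · exact Or.inr (Or.inr (Or.inl Sym2.eq_swap))
      · by_cases ha3 : a = w₃
        · subst ha3
          rcases hN3 b he with rfl | rfl | rfl
          · exact Or.inr (Or.inr (Or.inr (Or.inl Sym2.eq_swap)))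
          · exact Or.inr (Or.inr (Or.inr (Or.inr (Or.inl Sym2.eq_swap))))
          · exact Or.inr (Or.inr (Or.inr (Or.inr (Or.inr (Or.inl ⟨rfl, Ne.symm he.ne⟩)))))
        · by_cases hb3 : b = w₃
          · subst hb3
            rcases hN3 a he.symm with rfl | rfl | rfl
            · exact Or.inr (Or.inr (Or.inr (Or.inl rfl)))
            · exact Or.inr (Or.inr (Or.inr (Or.inr (Or.inl rfl))))
            · exact Or.inr (Or.inr (Or.inr (Or.inr (Or.inr (Or.inl ⟨Sym2.eq_swap, he.ne⟩)))))
          · by_cases hww2 : s(a, b) = s(w, w₂)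
            · exact Or.inl hww2
            · refine Or.inr (Or.inr (Or.inr (Or.inr (Or.inr (Or.inr ⟨?_, ?_, ?_, hww2⟩)))))
              · exact H.mem_edgeSet.mpr ((hHadj a b).mpr ⟨he, ha1, ha3, hb1, hb3⟩)
              · rw [Sym2.mem_iff]
                rintro (h | h)
                · exact ha1 h.symm
                · exact hb1 h.symm
              · rw [Sym2.mem_iff]
                rintro (h | h)
                · exact ha3 h.symm
                · exact hb3 h.symm
  have imposs : ∀ (a b c d : V), a ≠ c → a ≠ d → b ≠ c → b ≠ d →
      ¬ ∃ v, v ∈ s(a, b) ∧ v ∈ s(c, d) := by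
    rintro a b c d hac had hbc hbd ⟨v, hv1, hv2⟩
    rw [Sym2.mem_iff] at hv1 hv2
    rcases hv1 with rfl | rfl <;> rcases hv2 with h | h
    · exact hac h
    · exact had h
    · exact hbc h
    · exact hbd h
  have hHTC : HasTotalColoring G κ := by
    refine ⟨fv', fe', ?_, ?_, ?_⟩
    · -- vertex-vertex
      intro u v huv
      by_cases hu1 : u = w₁
      · rw [hu1, hfv_w1]
        rcases hN1 v (hu1 ▸ huv) with h | h
        · rw [h, hfv_gen w hne_w_w1 hne_w_w3]; exact ht₁w
        · rw [h, hfv_gen w₂ (Ne.symm hne_w1_w2) hne_w2_w3]; exact ht₁w2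
      · by_cases hv1 : v = w₁
        · rw [hv1, hfv_w1]
          rcases hN1 u (hv1 ▸ huv.symm) with h | h
          · rw [h, hfv_gen w hne_w_w1 hne_w_w3]; exact Ne.symm ht₁w
          · rw [h, hfv_gen w₂ (Ne.symm hne_w1_w2) hne_w2_w3]; exact Ne.symm ht₁w2
        · by_cases hu3 : u = w₃
          · rw [hu3, hfv_w3]
            rcases hN3 v (hu3 ▸ huv) with h | h | h
            · rw [h, hfv_gen w hne_w_w1 hne_w_w3]; exact ht₃w
            · rw [h, hfv_gen w₂ (Ne.symm hne_w1_w2) hne_w2_w3]; exact ht₃w2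
            · rw [h, hfv_gen x hne_x_w1 (show G.Adj w₃ x from by rw [← h, ← hu3]; exact huv).ne']
              exact ht₃x
          · by_cases hv3 : v = w₃
            · rw [hv3, hfv_w3]
              rcases hN3 u (hv3 ▸ huv.symm) with h | h | h
              · rw [h, hfv_gen w hne_w_w1 hne_w_w3]; exact Ne.symm ht₃w
              · rw [h, hfv_gen w₂ (Ne.symm hne_w1_w2) hne_w2_w3]; exact Ne.symm ht₃w2
              · rw [h, hfv_gen x hne_x_w1 (show G.Adj w₃ x from by rw [← h, ← hv3]; exact huv.symm).ne']
                exact Ne.symm ht₃x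
            · rw [hfv_gen u hu1 hu3, hfv_gen v hv1 hv3]
              exact hc1 u v ((hHadj u v).mpr ⟨huv, hu1, hu3, hv1, hv3⟩)
    · -- edge-edge
      intro e₁ e₂ he₁ he₂ hne hsh
      rcases hclass e₁ he₁ with rfl | rfl | rfl | rfl | rfl | ⟨rfl, hx31⟩ | ⟨hH1, hm11, hm13, hne1⟩ <;>
        rcases hclass e₂ he₂ with rfl | rfl | rfl | rfl | rfl | ⟨rfl, hx32⟩ | ⟨hH2, hm21, hm23, hne2⟩
      · exact absurd rfl hne
      · rw [hfe_ww2, hfe_ww1]; exact Ne.symm hc₁β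
      · rw [hfe_ww2, hfe_w1w2]; exact Ne.symm hc₂β
      · rw [hfe_ww2, hfe_ww3]; exact Ne.symm hγβ
      · rw [hfe_ww2, hfe_w2w3]; exact Ne.symm hδβ
      · exact absurd hsh (imposs w w₂ w₃ x hne_w_w3 (Ne.symm hne_x_w) hne_w2_w3 (Ne.symm hne_x_w2))
      · rw [hfe_ww2, hfe_gen e₂ hm21 hm23 hne2]
        obtain ⟨v, hv1, hv2⟩ := hsh
        rw [Sym2.mem_iff] at hv1
        rcases hv1 with hq | hq
        · exact fun h => hβP (by rw [h]; exact memP e₂ hH2 (hq ▸ hv2) hne2)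
        · exact fun h => hβQ (by rw [h]; exact memQ e₂ hH2 (hq ▸ hv2) hne2)
      · rw [hfe_ww1, hfe_ww2]; exact hc₁β
      · exact absurd rfl hne
      · rw [hfe_ww1, hfe_w1w2]; exact hc₁c₂
      · rw [hfe_ww1, hfe_ww3]; exact Ne.symm hγc₁
      · exact absurd hsh (imposs w w₁ w₂ w₃ hne_w_w2 hne_w_w3 hne_w1_w2 h13)
      · exact absurd hsh (imposs w w₁ w₃ x hne_w_w3 (Ne.symm hne_x_w) h13 (Ne.symm hne_x_w1))
      · rw [hfe_ww1, hfe_gen e₂ hm21 hm23 hne2]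
        obtain ⟨v, hv1, hv2⟩ := hsh
        rw [Sym2.mem_iff] at hv1
        rcases hv1 with hq | hq
        · exact fun h => hc₁P (by rw [h]; exact memP e₂ hH2 (hq ▸ hv2) hne2)
        · exact absurd (hq ▸ hv2) hm21
      · rw [hfe_w1w2, hfe_ww2]; exact hc₂β
      · rw [hfe_w1w2, hfe_ww1]; exact Ne.symm hc₁c₂
      · exact absurd rfl hne
      · exact absurd hsh (imposs w₁ w₂ w w₃ (Ne.symm hne_w_w1) h13 (Ne.symm hne_w_w2) hne_w2_w3)
      · rw [hfe_w1w2, hfe_w2w3]; exact Ne.symm hδc₂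
      · exact absurd hsh (imposs w₁ w₂ w₃ x h13 (Ne.symm hne_x_w1) hne_w2_w3 (Ne.symm hne_x_w2))
      · rw [hfe_w1w2, hfe_gen e₂ hm21 hm23 hne2]
        obtain ⟨v, hv1, hv2⟩ := hsh
        rw [Sym2.mem_iff] at hv1
        rcases hv1 with hq | hq
        · exact absurd (hq ▸ hv2) hm21
        · exact fun h => hc₂Q (by rw [h]; exact memQ e₂ hH2 (hq ▸ hv2) hne2)
      · rw [hfe_ww3, hfe_ww2]; exact hγβ
      · rw [hfe_ww3, hfe_ww1]; exact hγc₁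
      · exact absurd hsh (imposs w w₃ w₁ w₂ hne_w_w1 hne_w_w2 (Ne.symm h13) (Ne.symm hne_w2_w3))
      · exact absurd rfl hne
      · rw [hfe_ww3, hfe_w2w3]; exact hγδ
      · rw [hfe_ww3, hfe_w3x]; exact hγs
      · rw [hfe_ww3, hfe_gen e₂ hm21 hm23 hne2]
        obtain ⟨v, hv1, hv2⟩ := hsh
        rw [Sym2.mem_iff] at hv1
        rcases hv1 with hq | hq
        · exact fun h => hγP (by rw [h]; exact memP e₂ hH2 (hq ▸ hv2) hne2)
        · exact absurd (hq ▸ hv2) hm23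
      · rw [hfe_w2w3, hfe_ww2]; exact hδβ
      · exact absurd hsh (imposs w₂ w₃ w w₁ (Ne.symm hne_w_w2) (Ne.symm hne_w1_w2) (Ne.symm hne_w_w3) (Ne.symm h13))
      · rw [hfe_w2w3, hfe_w1w2]; exact hδc₂
      · rw [hfe_w2w3, hfe_ww3]; exact Ne.symm hγδ
      · exact absurd rfl hne
      · rw [hfe_w2w3, hfe_w3x]; exact hδs
      · rw [hfe_w2w3, hfe_gen e₂ hm21 hm23 hne2]
        obtain ⟨v, hv1, hv2⟩ := hsh
        rw [Sym2.mem_iff] at hv1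
        rcases hv1 with hq | hq
        · exact fun h => hδQ (by rw [h]; exact memQ e₂ hH2 (hq ▸ hv2) hne2)
        · exact absurd (hq ▸ hv2) hm23
      · exact absurd hsh (imposs w₃ x w w₂ (Ne.symm hne_w_w3) (Ne.symm hne_w2_w3) hne_x_w hne_x_w2)
      · exact absurd hsh (imposs w₃ x w w₁ (Ne.symm hne_w_w3) (Ne.symm h13) hne_x_w hne_x_w1)
      · exact absurd hsh (imposs w₃ x w₁ w₂ (Ne.symm h13) (Ne.symm hne_w2_w3) hne_x_w1 hne_x_w2)
      · rw [hfe_w3x, hfe_ww3]; exact Ne.symm hγs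
      · rw [hfe_w3x, hfe_w2w3]; exact Ne.symm hδs
      · exact absurd rfl hne
      · rw [hfe_w3x, hfe_gen e₂ hm21 hm23 hne2]
        obtain ⟨v, hv1, hv2⟩ := hsh
        rw [Sym2.mem_iff] at hv1
        rcases hv1 with hq | hq
        · exact absurd (hq ▸ hv2) hm23
        · exact fun h => hsR (by rw [h]; exact memR e₂ hH2 (hq ▸ hv2))
      · rw [hfe_gen e₁ hm11 hm13 hne1, hfe_ww2]
        obtain ⟨v, hv1, hv2⟩ := hsh
        rw [Sym2.mem_iff] at hv2
        rcases hv2 with hq | hq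
        · exact fun h => hβP (by rw [← h]; exact memP e₁ hH1 (hq ▸ hv1) hne1)
        · exact fun h => hβQ (by rw [← h]; exact memQ e₁ hH1 (hq ▸ hv1) hne1)
      · rw [hfe_gen e₁ hm11 hm13 hne1, hfe_ww1]
        obtain ⟨v, hv1, hv2⟩ := hsh
        rw [Sym2.mem_iff] at hv2
        rcases hv2 with hq | hq
        · exact fun h => hc₁P (by rw [← h]; exact memP e₁ hH1 (hq ▸ hv1) hne1)
        · exact absurd (hq ▸ hv1) hm11
      · rw [hfe_gen e₁ hm11 hm13 hne1, hfe_w1w2]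
        obtain ⟨v, hv1, hv2⟩ := hsh
        rw [Sym2.mem_iff] at hv2
        rcases hv2 with hq | hq
        · exact absurd (hq ▸ hv1) hm11
        · exact fun h => hc₂Q (by rw [← h]; exact memQ e₁ hH1 (hq ▸ hv1) hne1)
      · rw [hfe_gen e₁ hm11 hm13 hne1, hfe_ww3]
        obtain ⟨v, hv1, hv2⟩ := hsh
        rw [Sym2.mem_iff] at hv2
        rcases hv2 with hq | hq
        · exact fun h => hγP (by rw [← h]; exact memP e₁ hH1 (hq ▸ hv1) hne1)
        · exact absurd (hq ▸ hv1) hm13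
      · rw [hfe_gen e₁ hm11 hm13 hne1, hfe_w2w3]
        obtain ⟨v, hv1, hv2⟩ := hsh
        rw [Sym2.mem_iff] at hv2
        rcases hv2 with hq | hq
        · exact fun h => hδQ (by rw [← h]; exact memQ e₁ hH1 (hq ▸ hv1) hne1)
        · exact absurd (hq ▸ hv1) hm13
      · rw [hfe_gen e₁ hm11 hm13 hne1, hfe_w3x]
        obtain ⟨v, hv1, hv2⟩ := hsh
        rw [Sym2.mem_iff] at hv2
        rcases hv2 with hq | hq
        · exact absurd (hq ▸ hv1) hm13
        · exact fun h => hsR (by rw [← h]; exact memR e₁ hH1 (hq ▸ hv1))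
      · rw [hfe_gen e₁ hm11 hm13 hne1, hfe_gen e₂ hm21 hm23 hne2]
        exact hc2 e₁ e₂ hH1 hH2 hne hsh
    · -- vertex-edge
      intro v e he hv
      rcases hclass e he with rfl | rfl | rfl | rfl | rfl | ⟨rfl, hx3⟩ | ⟨hH1, hm1, hm3, hne1⟩
      · rw [hfe_ww2]
        rw [Sym2.mem_iff] at hv
        rcases hv with hq | hq
        · rw [hq, hfv_gen w hne_w_w1 hne_w_w3]
          exact fun h => hβP (by rw [← h]; exact hpvwP)
        · rw [hq, hfv_gen w₂ (Ne.symm hne_w1_w2) hne_w2_w3]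
          exact fun h => hβQ (by rw [← h]; exact hpvw2Q)
      · rw [hfe_ww1]
        rw [Sym2.mem_iff] at hv
        rcases hv with hq | hq
        · rw [hq, hfv_gen w hne_w_w1 hne_w_w3]
          exact fun h => hc₁P (by rw [← h]; exact hpvwP)
        · rw [hq, hfv_w1]; exact ht₁c₁
      · rw [hfe_w1w2]
        rw [Sym2.mem_iff] at hv
        rcases hv with hq | hq
        · rw [hq, hfv_w1]; exact ht₁c₂
        · rw [hq, hfv_gen w₂ (Ne.symm hne_w1_w2) hne_w2_w3]
          exact fun h => hc₂Q (by rw [← h]; exact hpvw2Q)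
      · rw [hfe_ww3]
        rw [Sym2.mem_iff] at hv
        rcases hv with hq | hq
        · rw [hq, hfv_gen w hne_w_w1 hne_w_w3]
          exact fun h => hγP (by rw [← h]; exact hpvwP)
        · rw [hq, hfv_w3]; exact ht₃γ
      · rw [hfe_w2w3]
        rw [Sym2.mem_iff] at hv
        rcases hv with hq | hq
        · rw [hq, hfv_gen w₂ (Ne.symm hne_w1_w2) hne_w2_w3]
          exact fun h => hδQ (by rw [← h]; exact hpvw2Q)
        · rw [hq, hfv_w3]; exact ht₃δ
      · rw [hfe_w3x]
        rw [Sym2.mem_iff] at hv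
        rcases hv with hq | hq
        · rw [hq, hfv_w3]; exact ht₃s
        · rw [hq, hfv_gen x hne_x_w1 hx3]
          exact fun h => hsR (by rw [← h]; exact hpvxR)
      · rw [hfe_gen e hm1 hm3 hne1]
        have q1 : v ≠ w₁ := fun hq => hm1 (hq ▸ hv)
        have q3 : v ≠ w₃ := fun hq => hm3 (hq ▸ hv)
        rw [hfv_gen v q1 q3]
        exact hc3 v e hH1 hv
  have hle : totalChromaticNumber G ≤ κ := Nat.sInf_le hHTC
  exact absurd hG.2.1 (not_lt.mpr hle)
end

section
/- For every graph G with maximum degree at most 2, χ''(G) ≤ Δ(G) + 2, i.e., the Total Coloring Conjecture holds for graphs of maximum degree at most 2. -/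
open SimpleGraph

variable {V : Type*}

/-!
A graph of maximum degree at most 2 is a disjoint union of paths and cycles. In a connected such
graph a longest path is Hamiltonian: it cannot be extended at its ends, and each inner vertex
already has its two neighbours on it. Hence every component is a subgraph of a cycle `C_m` with
`m ≥ 3`, and since total colourings pull back along injective homomorphisms and glue over
components, it suffices to totally colour `C_m` with 4 colours. Listing vertices and edges
alternately around the cycle, `v₀, v₀v₁, v₁, v₁v₂, …`, a total colouring of `C_m` is a colouring
of the square of `C_{2m}`, and the pattern `0123 0123 …` colours it (when `4 ∤ 2m`, start with
`012 012` instead). For degrees at most 1 the graph is acyclic, so two colours on the vertices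
and a third one on all edges suffice.
-/

section

variable {W : Type*} {G : SimpleGraph V}

lemma ncard_le_deg [Finite V] {v : V} {s : Set V} (hs : s ⊆ G.neighborSet v) :
    s.ncard ≤ deg G v :=
  Set.ncard_le_ncard hs (Set.toFinite _)

lemma eq_of_adj_of_deg_le_one [Finite V] {v x y : V} (hv : deg G v ≤ 1) (hx : G.Adj v x)
    (hy : G.Adj v y) : x = y := by
  by_contra hxy
  have := ncard_le_deg (s := {x, y}) (by rintro z (rfl | rfl) <;> assumption)
  rw [Set.ncard_pair hxy] at this
  omega

lemma eq_or_eq_of_adj_of_deg_le_two [Finite V] {v x y z : V} (hv : deg G v ≤ 2)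
    (hx : G.Adj v x) (hy : G.Adj v y) (hz : G.Adj v z) (hxy : x ≠ y) : z = x ∨ z = y := by
  by_contra! hz'
  have := ncard_le_deg (s := {x, y, z}) (by rintro w (rfl | rfl | rfl) <;> assumption)
  rw [Set.ncard_eq_three.2 ⟨x, y, z, hxy, hz'.1.symm, hz'.2.symm, rfl⟩] at this
  omega

lemma deg_induce_le [Finite V] (s : Set V) (v : s) : deg (G.induce s) v ≤ deg G v :=
  Set.ncard_le_ncard_of_injOn Subtype.val (fun _ h => h) Subtype.val_injective.injOn

lemma isTotalColoring_iff_forall_adj {α : Type*} {fv : V → α} {fe : Sym2 V → α} :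
    IsTotalColoring G fv fe ↔
      (∀ u v, G.Adj u v → fv u ≠ fv v) ∧
      (∀ w x y, G.Adj w x → G.Adj w y → x ≠ y → fe s(w, x) ≠ fe s(w, y)) ∧
      (∀ w x, G.Adj w x → fv w ≠ fe s(w, x)) := by
  refine ⟨fun ⟨hv, he, hve⟩ => ⟨hv, fun w x y hx hy hxy => ?_, fun w x hx => ?_⟩,
    fun ⟨hv, he, hve⟩ => ⟨hv, ?_, ?_⟩⟩
  · exact he _ _ hx hy (fun h => hxy (Sym2.congr_right.1 h))
      ⟨w, Sym2.mem_mk_left _ _, Sym2.mem_mk_left _ _⟩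
  · exact hve w _ hx (Sym2.mem_mk_left _ _)
  · rintro e₁ e₂ he₁ he₂ hne ⟨w, hw₁, hw₂⟩
    obtain ⟨x, rfl⟩ := Sym2.mem_iff_exists.1 hw₁
    obtain ⟨y, rfl⟩ := Sym2.mem_iff_exists.1 hw₂
    exact he w x y he₁ he₂ (by rintro rfl; exact hne rfl)
  · rintro w e he' hw
    obtain ⟨x, rfl⟩ := Sym2.mem_iff_exists.1 hw
    exact hve w x he'

theorem IsTotalColoring.comap {H : SimpleGraph W} {α : Type*} {fv : W → α} {fe : Sym2 W → α}
    (h : IsTotalColoring H fv fe) (f : G →g H)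
    (hf : ∀ v x y, G.Adj v x → G.Adj v y → f x = f y → x = y) :
    IsTotalColoring G (fv ∘ f) (fe ∘ Sym2.map f) := by
  obtain ⟨hv, he, hve⟩ := isTotalColoring_iff_forall_adj.1 h
  refine isTotalColoring_iff_forall_adj.2 ⟨fun u v huv => hv _ _ (f.map_adj huv),
    fun w x y hx hy hxy => he _ _ _ (f.map_adj hx) (f.map_adj hy) fun h => hxy (hf w x y hx hy h),
    fun w x hx => hve _ _ (f.map_adj hx)⟩

theorem HasTotalColoring.comap {H : SimpleGraph W} {k : ℕ} (h : HasTotalColoring H k)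
    (f : G →g H) (hf : ∀ v x y, G.Adj v x → G.Adj v y → f x = f y → x = y) :
    HasTotalColoring G k :=
  let ⟨fv, fe, hcol⟩ := h
  ⟨fv ∘ f, fe ∘ Sym2.map f, hcol.comap f hf⟩

theorem hasTotalColoring_of_forall_connectedComponent {k : ℕ}
    (h : ∀ c : G.ConnectedComponent, HasTotalColoring c.toSimpleGraph k) :
    HasTotalColoring G k := by
  classical
  choose fv fe hc using h
  -- `r c` retracts `V` onto `c.supp`, `ce e` is the component of an endpoint of `e`.
  let r (c : G.ConnectedComponent) (v : V) : c.supp :=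
    if hv : v ∈ c.supp then ⟨v, hv⟩ else ⟨_, c.nonempty_supp.some_mem⟩
  have hr (c : G.ConnectedComponent) (v : V) (hv : v ∈ c.supp) : r c v = ⟨v, hv⟩ := dif_pos hv
  let ce (e : Sym2 V) : G.ConnectedComponent := G.connectedComponentMk e.out.1
  have hce (w x : V) (hx : G.Adj w x) : ce s(w, x) = G.connectedComponentMk w := by
    rcases Sym2.mem_iff.1 (Sym2.out_fst_mem s(w, x)) with h | h
    · simp only [ce, h]
    · simp only [ce, h, ConnectedComponent.connectedComponentMk_eq_of_adj hx]
  refine ⟨fun v => fv _ (r (G.connectedComponentMk v) v),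
    fun e => fe (ce e) (e.map (r (ce e))), isTotalColoring_iff_forall_adj.2 ⟨?_, ?_, ?_⟩⟩
  · intro u v huv
    have hv : v ∈ (G.connectedComponentMk u).supp :=
      (ConnectedComponent.connectedComponentMk_eq_of_adj huv).symm
    rw [← (ConnectedComponent.connectedComponentMk_eq_of_adj huv), hr _ u rfl, hr _ v hv]
    exact (isTotalColoring_iff_forall_adj.1 (hc _)).1 _ _ huv
  · intro w x y hx hy hxy
    have hxw : x ∈ (G.connectedComponentMk w).supp :=
      (ConnectedComponent.connectedComponentMk_eq_of_adj hx).symm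
    have hyw : y ∈ (G.connectedComponentMk w).supp :=
      (ConnectedComponent.connectedComponentMk_eq_of_adj hy).symm
    rw [hce w x hx, hce w y hy, Sym2.map_mk, Sym2.map_mk, hr _ w rfl, hr _ x hxw,
      hr _ y hyw]
    exact (isTotalColoring_iff_forall_adj.1 (hc _)).2.1 _ _ _ hx hy (by simpa using hxy)
  · intro w x hx
    have hxw : x ∈ (G.connectedComponentMk w).supp :=
      (ConnectedComponent.connectedComponentMk_eq_of_adj hx).symm
    rw [hce w x hx, Sym2.map_mk, hr _ w rfl, hr _ x hxw]
    exact (isTotalColoring_iff_forall_adj.1 (hc _)).2.2 _ _ hx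

lemma cycleGraph_adj_iff_val {m : ℕ} (hm : 2 ≤ m) {a b : Fin m} :
    (cycleGraph m).Adj a b ↔ a.val + 1 = b.val ∨ b.val + 1 = a.val ∨
      (a.val = 0 ∧ b.val + 1 = m) ∨ (b.val = 0 ∧ a.val + 1 = m) := by
  rw [cycleGraph_adj']
  rcases lt_trichotomy a b with hab | rfl | hab
  · rw [Fin.coe_sub_iff_lt.2 hab, Fin.coe_sub_iff_le.2 hab.le]
    rw [Fin.lt_def] at hab
    omega
  · rw [Fin.coe_sub_iff_le.2 le_rfl]
    omega
  · rw [Fin.coe_sub_iff_le.2 hab.le, Fin.coe_sub_iff_lt.2 hab]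
    rw [Fin.lt_def] at hab
    omega

/-- A colouring of the positions `0, …, 2m - 1` of the square of `C_{2m}`. -/
def cyclePattern (m p : ℕ) : ℕ :=
  if m % 2 = 0 then p % 4 else if p < 6 then p % 3 else (p + 2) % 4

lemma cyclePattern_lt (m p : ℕ) : cyclePattern m p < 4 := by
  unfold cyclePattern
  split_ifs <;> omega

lemma cyclePattern_ne {m p q : ℕ} (hm : 3 ≤ m) (hp : p < 2 * m) (hq : q < 2 * m) (hpq : p ≠ q)
    (hclose : p ≤ q + 2 ∧ q ≤ p + 2 ∨ p + 2 * m ≤ q + 2 ∨ q + 2 * m ≤ p + 2) :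
    cyclePattern m p ≠ cyclePattern m q := by
  unfold cyclePattern
  split_ifs <;> omega

-- The edge `{i, j}` of `C_m` with `j = i + 1` sits at position `2i + 1 = i + j` of the square of
-- `C_{2m}`, the closing edge `{0, m - 1}` at position `2m - 1`.
def cycleEdgePos (m i j : ℕ) : ℕ :=
  if i + 1 = j ∨ j + 1 = i then i + j else 2 * m - 1

theorem cycleGraph_hasTotalColoring {m : ℕ} (hm : 3 ≤ m) :
    HasTotalColoring (cycleGraph m) 4 := by
  let col (p : ℕ) : Fin 4 := ⟨cyclePattern m p, cyclePattern_lt m p⟩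
  have hcol {p q : ℕ} (hp : p < 2 * m) (hq : q < 2 * m) (hpq : p ≠ q)
      (hclose : p ≤ q + 2 ∧ q ≤ p + 2 ∨ p + 2 * m ≤ q + 2 ∨ q + 2 * m ≤ p + 2) :
      col p ≠ col q :=
    fun h => cyclePattern_ne hm hp hq hpq hclose (Fin.val_eq_of_eq h)
  refine ⟨fun a => col (2 * a), Sym2.lift ⟨fun a b => col (cycleEdgePos m a b),
    fun a b => by simp only [cycleEdgePos, add_comm, or_comm]⟩,
    isTotalColoring_iff_forall_adj.2 ?_⟩
  simp only [Sym2.lift_mk, cycleGraph_adj_iff_val (by omega : 2 ≤ m)]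
  refine ⟨fun a b hab => ?_, fun w x y hx hy hxy => ?_, fun w x hx => ?_⟩
  · have := a.isLt; have := b.isLt
    exact hcol (by omega) (by omega) (by omega) (by omega)
  · have := w.isLt; have := x.isLt; have := y.isLt
    have hxy' := Fin.val_injective.ne hxy
    unfold cycleEdgePos
    split_ifs <;> exact hcol (by omega) (by omega) (by omega) (by omega)
  · have := w.isLt; have := x.isLt
    unfold cycleEdgePos
    split_ifs <;> exact hcol (by omega) (by omega) (by omega) (by omega)

namespace SimpleGraph.Walk

variable [Finite V] {u v : V} {p : G.Walk u v}

lemma IsPath.adj_getVert_of_deg_le_two (hp : p.IsPath) (hdeg : ∀ x, deg G x ≤ 2) {i : ℕ}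
    (hi₀ : 0 < i) (hi : i < p.length) {y : V} (hy : G.Adj (p.getVert i) y) :
    y = p.getVert (i - 1) ∨ y = p.getVert (i + 1) := by
  have hprev : G.Adj (p.getVert i) (p.getVert (i - 1)) := by
    simpa [Nat.sub_add_cancel hi₀] using (p.adj_getVert_succ (i := i - 1) (by omega)).symm
  have hne : p.getVert (i - 1) ≠ p.getVert (i + 1) := fun h => by
    have := hp.getVert_injOn (by simp only [Set.mem_ofPred_eq]; omega)
      (by simp only [Set.mem_ofPred_eq]; omega) h
    omega
  exact eq_or_eq_of_adj_of_deg_le_two (hdeg _) hprev (p.adj_getVert_succ hi) hy hne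

lemma IsPath.eq_succ_or_of_adj_getVert (hp : p.IsPath) (hdeg : ∀ x, deg G x ≤ 2) {i j : ℕ}
    (hij : i < j) (hj : j ≤ p.length) (h : G.Adj (p.getVert i) (p.getVert j)) :
    j = i + 1 ∨ (i = 0 ∧ j = p.length) := by
  have inj {a b : ℕ} (ha : a ≤ p.length) (hb : b ≤ p.length) (h : p.getVert a = p.getVert b) :
      a = b := hp.getVert_injOn ha hb h
  rcases Nat.eq_zero_or_pos i with rfl | hi₀
  · rcases hj.lt_or_eq with hj | rfl
    · rcases hp.adj_getVert_of_deg_le_two hdeg hij hj h.symm with h' | h' <;>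
      · have := inj (by omega) (by omega) h'
        omega
    · exact Or.inr ⟨rfl, rfl⟩
  · rcases hp.adj_getVert_of_deg_le_two hdeg hi₀ (by omega) h with h' | h' <;>
    · have := inj hj (by omega) h'
      omega

end SimpleGraph.Walk

namespace SimpleGraph

variable [Finite V]

theorem Connected.exists_isHamiltonian_of_deg_le_two [DecidableEq V] (hG : G.Connected)
    (hdeg : ∀ v, deg G v ≤ 2) : ∃ (u v : V) (p : G.Walk u v), p.IsHamiltonian := by
  classical
  have := Fintype.ofFinite V
  have : Nonempty (Σ u v, G.Path u v) :=
    let ⟨v⟩ := hG.nonempty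
    ⟨⟨v, v, Path.nil⟩⟩
  obtain ⟨⟨u, v, p, hp⟩, hmax⟩ :=
    Finite.exists_max fun q : Σ u v, G.Path u v => q.2.2.1.length
  have hclosed (x y : V) (hxy : G.Adj x y) (hx : x ∈ p.support) : y ∈ p.support := by
    by_contra hy
    obtain ⟨i, rfl, hi⟩ := Walk.mem_support_iff_exists_getVert.1 hx
    rcases Nat.eq_zero_or_pos i with rfl | hi₀
    · rw [Walk.getVert_zero] at hxy
      have := hmax ⟨y, v, Walk.cons hxy.symm p, (Walk.cons_isPath_iff _ _).2 ⟨hp, hy⟩⟩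
      simp at this
    rcases hi.lt_or_eq with hi | rfl
    · apply hy
      rcases hp.adj_getVert_of_deg_le_two hdeg hi₀ hi hxy with rfl | rfl <;>
        exact p.getVert_mem_support _
    · rw [Walk.getVert_length] at hxy
      have := hmax ⟨u, y, p.concat hxy, hp.concat hy hxy⟩
      simp at this
  refine ⟨u, v, p, hp.isHamiltonian_of_mem fun w => ?_⟩
  suffices ∀ x y (q : G.Walk x y), x ∈ p.support → y ∈ p.support from
    this u w (hG.preconnected u w).some p.start_mem_support
  intro x y q
  induction q with
  | nil => exact id
  | cons h _ ih => exact fun hx => ih (hclosed _ _ h hx)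

theorem Walk.IsHamiltonian.isContained_cycleGraph [DecidableEq V] {u v : V} {p : G.Walk u v}
    (hp : p.IsHamiltonian) (hdeg : ∀ v, deg G v ≤ 2) :
    G ⊑ cycleGraph (max 3 (p.length + 1)) := by
  have hm : p.length + 1 ≤ max 3 (p.length + 1) := le_max_right _ _
  let idx (w : V) : ℕ := p.support.idxOf w
  have hidx (w : V) : p.getVert (idx w) = w := p.getVert_support_idxOf (hp.mem_support w)
  have hidx_le (w : V) : idx w ≤ p.length := by
    show p.support.idxOf w ≤ p.length
    have := List.idxOf_lt_length_iff.2 (hp.mem_support w)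
    rw [Walk.length_support] at this
    omega
  refine ⟨⟨⟨fun w => ⟨idx w, by have := hidx_le w; omega⟩, fun {x y} hxy => ?_⟩,
    fun x y hxy => ?_⟩⟩
  · rw [cycleGraph_adj_iff_val (by omega), Fin.val_mk, Fin.val_mk]
    have hne : idx x ≠ idx y := fun h => hxy.ne (by rw [← hidx x, ← hidx y, h])
    rcases Nat.lt_or_gt_of_ne hne with h | h
    · have := hp.isPath.eq_succ_or_of_adj_getVert hdeg h (hidx_le y) (by rwa [hidx, hidx])
      omega
    · have := hp.isPath.eq_succ_or_of_adj_getVert hdeg h (hidx_le x)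
        (by rwa [hidx, hidx, G.adj_comm])
      omega
  · rw [← hidx x, ← hidx y]
    exact congrArg p.getVert (Fin.val_eq_of_eq hxy)

theorem Connected.isContained_cycleGraph (hG : G.Connected) (hdeg : ∀ v, deg G v ≤ 2) :
    ∃ m, 3 ≤ m ∧ G ⊑ cycleGraph m := by
  classical
  obtain ⟨u, v, p, hp⟩ := hG.exists_isHamiltonian_of_deg_le_two hdeg
  exact ⟨_, le_max_left _ _, hp.isContained_cycleGraph hdeg⟩

end SimpleGraph

theorem hasTotalColoring_four_of_deg_le_two [Finite V] (hdeg : ∀ v, deg G v ≤ 2) :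
    HasTotalColoring G 4 :=
  hasTotalColoring_of_forall_connectedComponent fun c => by
    obtain ⟨m, hm, ⟨f⟩⟩ := c.connected_toSimpleGraph.isContained_cycleGraph fun v =>
      (deg_induce_le _ v).trans (hdeg v)
    exact (cycleGraph_hasTotalColoring hm).comap f.toHom fun _ _ _ _ _ h => f.injective h

lemma isAcyclic_of_deg_le_one [Finite V] (hdeg : ∀ v, deg G v ≤ 1) : G.IsAcyclic := by
  intro v c hc
  have := hc.three_le_length
  exact hc.getVert_sub_one_ne_getVert_add_one (i := 1) (by omega) <|
    eq_of_adj_of_deg_le_one (hdeg _) (c.adj_getVert_succ (i := 0) (by omega)).symm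
      (c.adj_getVert_succ (i := 1) (by omega))

theorem hasTotalColoring_three_of_deg_le_one [Finite V] (hdeg : ∀ v, deg G v ≤ 1) :
    HasTotalColoring G 3 := by
  obtain ⟨c⟩ := (isAcyclic_of_deg_le_one hdeg).colorable_two
  exact ⟨fun v => (c v).castSucc, fun _ => Fin.last 2, isTotalColoring_iff_forall_adj.2
    ⟨fun u v huv h => c.valid huv (Fin.castSucc_injective _ h),
      fun w x y hx hy hxy => absurd (eq_of_adj_of_deg_le_one (hdeg w) hx hy) hxy,
      fun _ _ _ => Fin.castSucc_ne_last _⟩⟩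

theorem hasTotalColoring_of_deg_eq_zero [Finite V] {k : ℕ} [NeZero k]
    (hdeg : ∀ v, deg G v = 0) : HasTotalColoring G k := by
  have hnadj (u v : V) : ¬G.Adj u v := fun h => by
    have := ncard_le_deg (s := {v}) (Set.singleton_subset_iff.2 h)
    rw [Set.ncard_singleton, hdeg] at this
    omega
  exact ⟨0, 0, isTotalColoring_iff_forall_adj.2 ⟨fun u v h => (hnadj u v h).elim,
    fun w x _ h _ => (hnadj w x h).elim, fun w x h => (hnadj w x h).elim⟩⟩

end

/-- the Total Coloring Conjecture holds for graphs of maximum degree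
at most 2: `χ''(G) ≤ Δ(G) + 2`. -/
theorem stmt_19 {V : Type*} [Fintype V] (G : SimpleGraph V)
    (hΔ : maxDeg G ≤ 2) :
    totalChromaticNumber G ≤ maxDeg G + 2 := by
  have hdeg (v : V) : deg G v ≤ maxDeg G := le_ciSup (Set.finite_range _).bddAbove v
  apply Nat.sInf_le
  rcases (by omega : maxDeg G = 0 ∨ maxDeg G = 1 ∨ maxDeg G = 2) with h | h | h <;>
    rw [h] at hdeg ⊢
  · exact hasTotalColoring_of_deg_eq_zero fun v => Nat.le_zero.1 (hdeg v)
  · exact hasTotalColoring_three_of_deg_le_one hdeg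
  · exact hasTotalColoring_four_of_deg_le_two hdeg
end
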